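/- arXiv:2506.02663 — 6 statements merged into one kernel-verified Lean document; each statement's English description precedes it below -/
import Mathlib

section
/- Let D ⊂ ℝ^n be open, I ⊂ ℝ an open interval, and ν ∈ ℝ. Let w : I × D → ℝ^n, u : I × D → ℝ^n, g : I × D → ℝ^n, and q : I × D → ℝ all be smooth (C^∞). Suppose that on I × D the momentum equation ∂w/∂t = g − (u·∇)u − ∇q + ν·Δw holds (componentwise), and that q solves the pressure Poisson equation Δq = ∇·(g − (u·∇)u) on I × D. Then the divergence of w satisfies the heat equation ∂(∇·w)/∂t = ν·Δ(∇·w) on I × D. -/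
open Set

/-- Partial derivative of `f : ℝⁿ → ℝ` in the `i`-th coordinate direction. -/
noncomputable def pd {n : ℕ} (i : Fin n) (f : (Fin n → ℝ) → ℝ) (x : Fin n → ℝ) : ℝ :=
  fderiv ℝ f x (Pi.single i 1)

/-- Laplacian `Δf = Σᵢ ∂²f/∂xᵢ²`. -/
noncomputable def lap {n : ℕ} (f : (Fin n → ℝ) → ℝ) (x : Fin n → ℝ) : ℝ :=
  ∑ i, pd i (pd i f) x

/-- Divergence `∇·v = Σᵢ ∂vᵢ/∂xᵢ` of a vector field. -/
noncomputable def divg {n : ℕ} (v : (Fin n → ℝ) → (Fin n → ℝ)) (x : Fin n → ℝ) : ℝ :=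
  ∑ i, pd i (fun y => v y i) x

section AuxGeneral

variable {E : Type*} [NormedAddCommGroup E] [NormedSpace ℝ E]

lemma ddA {f : E → ℝ} {x : E} (hf : ContDiffAt ℝ (⊤ : ℕ∞) f x) (v : E) :
    ContDiffAt ℝ (⊤ : ℕ∞) (fun y => fderiv ℝ f y v) x := by
  have h1 : ContDiffAt ℝ ((⊤ : ℕ∞) : WithTop ℕ∞) (fderiv ℝ f) x :=
    hf.fderiv_right (by norm_cast)
  exact (ContinuousLinearMap.apply ℝ ℝ v).contDiff.contDiffAt.comp x h1

lemma ddD {f : E → ℝ} {x : E} (hf : ContDiffAt ℝ (⊤ : ℕ∞) f x) (v : E) :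
    DifferentiableAt ℝ (fun y => fderiv ℝ f y v) x :=
  (ddA hf v).differentiableAt (by norm_cast)

lemma ddswap {f : E → ℝ} {x : E} (hf : ContDiffAt ℝ (⊤ : ℕ∞) f x) (a b : E) :
    fderiv ℝ (fun y => fderiv ℝ f y a) x b = fderiv ℝ (fun y => fderiv ℝ f y b) x a := by
  have hd : DifferentiableAt ℝ (fderiv ℝ f) x :=
    (hf.fderiv_right (m := 1) (by norm_cast)).differentiableAt one_ne_zero
  have h1 : ∀ v : E, fderiv ℝ (fun y => fderiv ℝ f y v) x =
      (fderiv ℝ (fderiv ℝ f) x).flip v := by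
    intro v
    have := fderiv_clm_apply (c := fderiv ℝ f) (u := fun _ => v) hd (differentiableAt_const v)
    simpa using this
  have hs : IsSymmSndFDerivAt ℝ f x := hf.isSymmSndFDerivAt (by rw [minSmoothness_of_isRCLikeNormedField]; norm_cast)
  rw [h1 a, h1 b]
  exact hs b a

variable {F : Type*} [NormedAddCommGroup F] [NormedSpace ℝ F]

lemma slice_x {Φ : ℝ × F → ℝ} {t : ℝ} {x : F} (h : DifferentiableAt ℝ Φ (t, x)) (e : F) :
    fderiv ℝ (fun y => Φ (t, y)) x e = fderiv ℝ Φ (t, x) (0, e) := by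
  have hm : HasFDerivAt (fun y : F => ((t : ℝ), y))
      ((0 : F →L[ℝ] ℝ).prod (ContinuousLinearMap.id ℝ F)) x :=
    HasFDerivAt.prodMk (hasFDerivAt_const t x) (hasFDerivAt_id x)
  have := (h.hasFDerivAt.comp x hm).fderiv
  rw [show (fun y => Φ (t, y)) = Φ ∘ Prod.mk t from rfl, this]; rfl

lemma slice_t' {Φ : ℝ × F → ℝ} {t : ℝ} {x : F} (h : DifferentiableAt ℝ Φ (t, x)) :
    HasDerivAt (fun s => Φ (s, x)) (fderiv ℝ Φ (t, x) (1, 0)) t := by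
  have hm : HasFDerivAt (fun s : ℝ => (s, x))
      ((ContinuousLinearMap.id ℝ ℝ).prod (0 : ℝ →L[ℝ] F)) t :=
    HasFDerivAt.prodMk (hasFDerivAt_id t) (hasFDerivAt_const x t)
  have := (h.hasFDerivAt.comp t hm).hasDerivAt
  exact this

lemma slice_t {Φ : ℝ × F → ℝ} {t : ℝ} {x : F} (h : DifferentiableAt ℝ Φ (t, x)) :
    deriv (fun s => Φ (s, x)) t = fderiv ℝ Φ (t, x) (1, 0) :=
  (slice_t' h).deriv

lemma slice_contDiffAt_x {Φ : ℝ × F → ℝ} {t : ℝ} {x : F}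
    (h : ContDiffAt ℝ (⊤ : ℕ∞) Φ (t, x)) :
    ContDiffAt ℝ (⊤ : ℕ∞) (fun y => Φ (t, y)) x :=
  h.comp x ((contDiffAt_const (c := t)).prodMk contDiffAt_id)

end AuxGeneral

section AuxPd

variable {n : ℕ}

lemma pd_eq (i : Fin n) (f : (Fin n → ℝ) → ℝ) :
    pd i f = fun x => fderiv ℝ f x (Pi.single i 1) := rfl

lemma pd_congr {f g : (Fin n → ℝ) → ℝ} {x : Fin n → ℝ} (i : Fin n)
    (h : f =ᶠ[nhds x] g) : pd i f x = pd i g x := by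
  simp only [pd, h.fderiv_eq]

lemma pd_contDiffAt {f : (Fin n → ℝ) → ℝ} {x : Fin n → ℝ} (i : Fin n)
    (hf : ContDiffAt ℝ (⊤ : ℕ∞) f x) : ContDiffAt ℝ (⊤ : ℕ∞) (pd i f) x := by
  rw [pd_eq]; exact ddA hf _

lemma pd_diff {f : (Fin n → ℝ) → ℝ} {x : Fin n → ℝ} (i : Fin n)
    (hf : ContDiffAt ℝ (⊤ : ℕ∞) f x) : DifferentiableAt ℝ (pd i f) x :=
  (pd_contDiffAt i hf).differentiableAt (by norm_cast)

lemma pd_swap {f : (Fin n → ℝ) → ℝ} {x : Fin n → ℝ} (i j : Fin n)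
    (hf : ContDiffAt ℝ (⊤ : ℕ∞) f x) :
    pd i (pd j f) x = pd j (pd i f) x := by
  simp only [pd, pd_eq]
  exact ddswap hf _ _

lemma pd_add {f g : (Fin n → ℝ) → ℝ} {x : Fin n → ℝ} (i : Fin n)
    (hf : DifferentiableAt ℝ f x) (hg : DifferentiableAt ℝ g x) :
    pd i (fun y => f y + g y) x = pd i f x + pd i g x := by
  simp [pd, fderiv_fun_add hf hg]

lemma pd_sub {f g : (Fin n → ℝ) → ℝ} {x : Fin n → ℝ} (i : Fin n)
    (hf : DifferentiableAt ℝ f x) (hg : DifferentiableAt ℝ g x) :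
    pd i (fun y => f y - g y) x = pd i f x - pd i g x := by
  simp [pd, fderiv_fun_sub hf hg]

lemma pd_const_mul {f : (Fin n → ℝ) → ℝ} {x : Fin n → ℝ} (i : Fin n) (c : ℝ)
    (hf : DifferentiableAt ℝ f x) :
    pd i (fun y => c * f y) x = c * pd i f x := by
  simp [pd, fderiv_const_mul hf c]

lemma pd_sum {ι : Type*} (s : Finset ι) {f : ι → (Fin n → ℝ) → ℝ} {x : Fin n → ℝ}
    (i : Fin n) (hf : ∀ j ∈ s, DifferentiableAt ℝ (f j) x) :
    pd i (fun y => ∑ j ∈ s, f j y) x = ∑ j ∈ s, pd i (f j) x := by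
  simp [pd, fderiv_fun_sum hf]

/-- triple mixed-partial swap on an open set -/
lemma pd_triple_swap {D : Set (Fin n → ℝ)} (hD : IsOpen D) {x : Fin n → ℝ} (hx : x ∈ D)
    {f : (Fin n → ℝ) → ℝ} (hf : ∀ y ∈ D, ContDiffAt ℝ (⊤ : ℕ∞) f y) (i j : Fin n) :
    pd i (pd j (pd j f)) x = pd j (pd j (pd i f)) x := by
  have h1 : pd i (pd j (pd j f)) x = pd j (pd i (pd j f)) x :=
    pd_swap i j (pd_contDiffAt j (hf x hx))
  have h2 : pd i (pd j f) =ᶠ[nhds x] pd j (pd i f) := by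
    filter_upwards [hD.mem_nhds hx] with y hy
    exact pd_swap i j (hf y hy)
  rw [h1, pd_congr j h2]

end AuxPd

/-- If `w` satisfies the momentum equation `∂w/∂t = g − (u·∇)u − ∇q + ν Δw` and `q` solves
the pressure Poisson equation `Δq = ∇·(g − (u·∇)u)` on `I × D`, then `∇·w` satisfies the
heat equation `∂(∇·w)/∂t = ν Δ(∇·w)` on `I × D`. -/
theorem divergence_satisfies_heat_equation
    (n : ℕ) (D : Set (Fin n → ℝ)) (hD : IsOpen D)
    (I : Set ℝ) (hI : ∃ a b : ℝ, I = Ioo a b) (ν : ℝ)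
    (w u g : ℝ → (Fin n → ℝ) → (Fin n → ℝ)) (q : ℝ → (Fin n → ℝ) → ℝ)
    (hw : ContDiffOn ℝ (⊤ : ℕ∞) (fun p : ℝ × (Fin n → ℝ) => w p.1 p.2) (I ×ˢ D))
    (hu : ContDiffOn ℝ (⊤ : ℕ∞) (fun p : ℝ × (Fin n → ℝ) => u p.1 p.2) (I ×ˢ D))
    (hg : ContDiffOn ℝ (⊤ : ℕ∞) (fun p : ℝ × (Fin n → ℝ) => g p.1 p.2) (I ×ˢ D))
    (hq : ContDiffOn ℝ (⊤ : ℕ∞) (fun p : ℝ × (Fin n → ℝ) => q p.1 p.2) (I ×ˢ D))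
    (hmom : ∀ t ∈ I, ∀ x ∈ D, ∀ i,
      deriv (fun s => w s x i) t =
        g t x i - (∑ j, u t x j * pd j (fun y => u t y i) x) - pd i (q t) x
          + ν * lap (fun y => w t y i) x)
    (hppe : ∀ t ∈ I, ∀ x ∈ D,
      lap (q t) x =
        divg (fun y j => g t y j - ∑ k, u t y k * pd k (fun z => u t z j) y) x) :
    ∀ t ∈ I, ∀ x ∈ D,
      deriv (fun s => divg (w s) x) t = ν * lap (fun y => divg (w t) y) x := by
  obtain ⟨a, b, rfl⟩ := hI
  set I := Ioo a b with hIdef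
  have hIopen : IsOpen I := isOpen_Ioo
  have hS : IsOpen (I ×ˢ D) := hIopen.prod hD
  intro t ht x hx
  have hp : (t, x) ∈ I ×ˢ D := ⟨ht, hx⟩
  -- joint smoothness of components
  have hwC : ∀ (i : Fin n), ∀ p ∈ I ×ˢ D,
      ContDiffAt ℝ (⊤ : ℕ∞) (fun p : ℝ × (Fin n → ℝ) => w p.1 p.2 i) p := by
    intro i p hp'
    exact ((ContinuousLinearMap.proj (R := ℝ) (φ := fun _ : Fin n => ℝ)
      i).contDiff.comp_contDiffOn hw).contDiffAt (hS.mem_nhds hp')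
  have huC : ∀ (i : Fin n), ∀ p ∈ I ×ˢ D,
      ContDiffAt ℝ (⊤ : ℕ∞) (fun p : ℝ × (Fin n → ℝ) => u p.1 p.2 i) p := by
    intro i p hp'
    exact ((ContinuousLinearMap.proj (R := ℝ) (φ := fun _ : Fin n => ℝ)
      i).contDiff.comp_contDiffOn hu).contDiffAt (hS.mem_nhds hp')
  have hgC : ∀ (i : Fin n), ∀ p ∈ I ×ˢ D,
      ContDiffAt ℝ (⊤ : ℕ∞) (fun p : ℝ × (Fin n → ℝ) => g p.1 p.2 i) p := by
    intro i p hp'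
    exact ((ContinuousLinearMap.proj (R := ℝ) (φ := fun _ : Fin n => ℝ)
      i).contDiff.comp_contDiffOn hg).contDiffAt (hS.mem_nhds hp')
  have hqC : ∀ p ∈ I ×ˢ D,
      ContDiffAt ℝ (⊤ : ℕ∞) (fun p : ℝ × (Fin n → ℝ) => q p.1 p.2) p := by
    intro p hp'
    exact hq.contDiffAt (hS.mem_nhds hp')
  -- spatial slices at time t
  have hWt : ∀ (i : Fin n), ∀ y ∈ D, ContDiffAt ℝ (⊤ : ℕ∞) (fun z => w t z i) y :=
    fun i y hy => slice_contDiffAt_x (hwC i (t, y) ⟨ht, hy⟩)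
  have hUt : ∀ (i : Fin n), ∀ y ∈ D, ContDiffAt ℝ (⊤ : ℕ∞) (fun z => u t z i) y :=
    fun i y hy => slice_contDiffAt_x (huC i (t, y) ⟨ht, hy⟩)
  have hGt : ∀ (i : Fin n), ∀ y ∈ D, ContDiffAt ℝ (⊤ : ℕ∞) (fun z => g t z i) y :=
    fun i y hy => slice_contDiffAt_x (hgC i (t, y) ⟨ht, hy⟩)
  have hQt : ∀ y ∈ D, ContDiffAt ℝ (⊤ : ℕ∞) (q t) y :=
    fun y hy => slice_contDiffAt_x (hqC (t, y) ⟨ht, hy⟩)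
  -- abbreviations
  set e : Fin n → (Fin n → ℝ) := fun i => Pi.single i 1 with he
  -- Step 1: compute the time derivative of the divergence
  have hterm : ∀ i : Fin n, HasDerivAt (fun s => pd i (fun y => w s y i) x)
      (fderiv ℝ (fun p : ℝ × (Fin n → ℝ) =>
        fderiv ℝ (fun p' : ℝ × (Fin n → ℝ) => w p'.1 p'.2 i) p
          ((1 : ℝ), (0 : Fin n → ℝ))) (t, x) (0, e i)) t := by
    intro i
    set Wi : ℝ × (Fin n → ℝ) → ℝ := fun p => w p.1 p.2 i with hWi
    set Ψi : ℝ × (Fin n → ℝ) → ℝ := fun p => fderiv ℝ Wi p (0, e i) with hΨi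
    have hΨC : ContDiffAt ℝ (⊤ : ℕ∞) Ψi (t, x) := ddA (hwC i (t, x) hp) _
    have h1 : HasDerivAt (fun s => Ψi (s, x)) (fderiv ℝ Ψi (t, x) (1, 0)) t :=
      slice_t' (hΨC.differentiableAt (by norm_cast))
    have h2 : (fun s => Ψi (s, x)) =ᶠ[nhds t] fun s => pd i (fun y => w s y i) x := by
      filter_upwards [hIopen.mem_nhds ht] with s hs
      have hd : DifferentiableAt ℝ Wi (s, x) :=
        (hwC i (s, x) ⟨hs, hx⟩).differentiableAt (by norm_cast)
      exact (slice_x hd (e i)).symm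
    have h3 : HasDerivAt (fun s => pd i (fun y => w s y i) x)
        (fderiv ℝ Ψi (t, x) (1, 0)) t := by
      exact h1.congr_of_eventuallyEq h2.symm
    have h4 : fderiv ℝ Ψi (t, x) (1, 0) =
        fderiv ℝ (fun p => fderiv ℝ Wi p ((1 : ℝ), (0 : Fin n → ℝ))) (t, x) (0, e i) :=
      ddswap (hwC i (t, x) hp) _ _
    rw [h4] at h3
    exact h3
  have hLHS : deriv (fun s => divg (w s) x) t =
      ∑ i : Fin n, fderiv ℝ (fun p : ℝ × (Fin n → ℝ) =>
        fderiv ℝ (fun p' : ℝ × (Fin n → ℝ) => w p'.1 p'.2 i) p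
          ((1 : ℝ), (0 : Fin n → ℝ))) (t, x) (0, e i) := by
    have hsum : HasDerivAt (fun s => ∑ i : Fin n, pd i (fun y => w s y i) x)
        (∑ i : Fin n, fderiv ℝ (fun p : ℝ × (Fin n → ℝ) =>
          fderiv ℝ (fun p' : ℝ × (Fin n → ℝ) => w p'.1 p'.2 i) p
            ((1 : ℝ), (0 : Fin n → ℝ))) (t, x) (0, e i)) t :=
      HasDerivAt.fun_sum (fun i _ => hterm i)
    rw [← hsum.deriv]
    rfl
  -- Step 1b: rewrite each term via the momentum equation
  have hterm2 : ∀ i : Fin n,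
      fderiv ℝ (fun p : ℝ × (Fin n → ℝ) =>
        fderiv ℝ (fun p' : ℝ × (Fin n → ℝ) => w p'.1 p'.2 i) p
          ((1 : ℝ), (0 : Fin n → ℝ))) (t, x) (0, e i) =
      pd i (fun y => g t y i - (∑ j, u t y j * pd j (fun z => u t z i) y) - pd i (q t) y
          + ν * lap (fun z => w t z i) y) x := by
    intro i
    set Wi : ℝ × (Fin n → ℝ) → ℝ := fun p => w p.1 p.2 i with hWi
    set Θi : ℝ × (Fin n → ℝ) → ℝ := fun p => fderiv ℝ Wi p ((1 : ℝ), (0 : Fin n → ℝ))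
      with hΘi
    have hΘC : ContDiffAt ℝ (⊤ : ℕ∞) Θi (t, x) := ddA (hwC i (t, x) hp) _
    have h1 : fderiv ℝ Θi (t, x) (0, e i) = pd i (fun y => Θi (t, y)) x :=
      (slice_x (hΘC.differentiableAt (by norm_cast)) (e i)).symm
    rw [h1]
    apply pd_congr
    filter_upwards [hD.mem_nhds hx] with y hy
    have hd : DifferentiableAt ℝ Wi (t, y) :=
      (hwC i (t, y) ⟨ht, hy⟩).differentiableAt (by norm_cast)
    have h2 : Θi (t, y) = deriv (fun s => w s y i) t := (slice_t hd).symm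
    rw [h2]
    exact hmom t ht y hy i
  -- differentiability of the pieces of the right-hand side at points of D
  have hABd : ∀ (i : Fin n), ∀ y ∈ D, DifferentiableAt ℝ
      (fun y' => g t y' i - ∑ j, u t y' j * pd j (fun z => u t z i) y') y := by
    intro i y hy
    apply DifferentiableAt.sub
    · exact (hGt i y hy).differentiableAt (by norm_cast)
    · apply DifferentiableAt.fun_sum
      intro j _
      exact ((hUt j y hy).differentiableAt (by norm_cast)).mul
        (pd_diff j (hUt i y hy))
  have hCd : ∀ (i : Fin n), ∀ y ∈ D, DifferentiableAt ℝ (pd i (q t)) y :=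
    fun i y hy => pd_diff i (hQt y hy)
  have hLd : ∀ (i : Fin n), ∀ y ∈ D, DifferentiableAt ℝ (lap (fun z => w t z i)) y := by
    intro i y hy
    have : DifferentiableAt ℝ
        (fun y' => ∑ j, pd j (pd j (fun z => w t z i)) y') y := by
      apply DifferentiableAt.fun_sum
      intro j _
      exact pd_diff j (pd_contDiffAt j (hWt i y hy))
    exact this
  -- Step 2: split each pd and use the PPE
  have hterm3 : ∀ i : Fin n,
      pd i (fun y => g t y i - (∑ j, u t y j * pd j (fun z => u t z i) y) - pd i (q t) y
          + ν * lap (fun z => w t z i) y) x =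
      pd i (fun y => g t y i - ∑ j, u t y j * pd j (fun z => u t z i) y) x
        - pd i (pd i (q t)) x + ν * pd i (lap (fun z => w t z i)) x := by
    intro i
    rw [pd_add i (((hABd i x hx).fun_sub (hCd i x hx)))
        ((hLd i x hx).const_mul ν),
      pd_sub i (hABd i x hx) (hCd i x hx),
      pd_const_mul i ν (hLd i x hx)]
  have hcancel :
      (∑ i : Fin n, pd i (fun y => g t y i - ∑ j, u t y j * pd j (fun z => u t z i) y) x)
        = ∑ i : Fin n, pd i (pd i (q t)) x := by
    have h1 : (∑ i : Fin n,
        pd i (fun y => g t y i - ∑ j, u t y j * pd j (fun z => u t z i) y) x)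
        = divg (fun y j => g t y j - ∑ k, u t y k * pd k (fun z => u t z j) y) x := rfl
    have h2 : (∑ i : Fin n, pd i (pd i (q t)) x) = lap (q t) x := rfl
    rw [h1, h2, hppe t ht x hx]
  -- Step 3: identify the remaining term with the Laplacian of the divergence
  have hstep3 : (∑ i : Fin n, pd i (lap (fun z => w t z i)) x)
      = lap (fun y => divg (w t) y) x := by
    have hleft : ∀ i : Fin n, pd i (lap (fun z => w t z i)) x
        = ∑ j : Fin n, pd i (pd j (pd j (fun z => w t z i))) x := by
      intro i
      have : pd i (fun y => ∑ j, pd j (pd j (fun z => w t z i)) y) x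
          = ∑ j : Fin n, pd i (pd j (pd j (fun z => w t z i))) x :=
        pd_sum Finset.univ i (fun j _ => pd_diff j (pd_contDiffAt j (hWt i x hx)))
      exact this
    have hright : ∀ j : Fin n, pd j (pd j (fun y => divg (w t) y)) x
        = ∑ i : Fin n, pd j (pd j (pd i (fun z => w t z i))) x := by
      intro j
      have hev : pd j (fun y => divg (w t) y) =ᶠ[nhds x]
          fun y => ∑ i, pd j (pd i (fun z => w t z i)) y := by
        filter_upwards [hD.mem_nhds hx] with y hy
        have : pd j (fun y' => ∑ i, pd i (fun z => w t z i) y') y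
            = ∑ i : Fin n, pd j (pd i (fun z => w t z i)) y :=
          pd_sum Finset.univ j (fun i _ => pd_diff i (hWt i y hy))
        exact this
      have h1 : pd j (pd j (fun y => divg (w t) y)) x
          = pd j (fun y => ∑ i, pd j (pd i (fun z => w t z i)) y) x :=
        pd_congr j hev
      rw [h1]
      exact pd_sum Finset.univ j
        (fun i _ => pd_diff j (pd_contDiffAt i (hWt i x hx)))
    calc (∑ i : Fin n, pd i (lap (fun z => w t z i)) x)
        = ∑ i : Fin n, ∑ j : Fin n, pd i (pd j (pd j (fun z => w t z i))) x := by
          exact Finset.sum_congr rfl (fun i _ => hleft i)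
      _ = ∑ j : Fin n, ∑ i : Fin n, pd i (pd j (pd j (fun z => w t z i))) x :=
          Finset.sum_comm
      _ = ∑ j : Fin n, ∑ i : Fin n, pd j (pd j (pd i (fun z => w t z i))) x := by
          refine Finset.sum_congr rfl (fun j _ => Finset.sum_congr rfl (fun i _ => ?_))
          exact pd_triple_swap hD hx (hWt i) i j
      _ = ∑ j : Fin n, pd j (pd j (fun y => divg (w t) y)) x := by
          exact Finset.sum_congr rfl (fun j _ => (hright j).symm)
      _ = lap (fun y => divg (w t) y) x := rfl
  -- put everything together
  rw [hLHS]
  rw [Finset.sum_congr rfl (fun i _ => (hterm2 i).trans (hterm3 i))]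
  rw [Finset.sum_add_distrib, Finset.sum_sub_distrib, hcancel, sub_self, zero_add,
    ← Finset.mul_sum, hstep3]
end

section
/- Fix x₀ ∈ ℝ and let f : ℝ → ℝ be of class C⁴ on an open neighborhood of x₀. Then, with A_j := (1/h) ∫_{x₀+jh}^{x₀+(j+1)h} f(x) dx, one has f(x₀) = (1/12)·(−A₁ + 7A₀ + 7A₋₁ − A₋₂) + O(h⁴) as h → 0⁺. -/
open Set MeasureTheory intervalIntegral

/-- The average of `f` over the `j`-th cell `[x₀ + jh, x₀ + (j+1)h]`. -/
noncomputable def cellAvg (f : ℝ → ℝ) (x₀ h : ℝ) (j : ℤ) : ℝ :=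
  (1 / h) * ∫ x in (x₀ + (j : ℝ) * h)..(x₀ + ((j : ℝ) + 1) * h), f x

lemma mvt_pow_step {φ φ' : ℝ → ℝ} {δ K : ℝ} {m : ℕ} (hK : 0 ≤ K) (hφ0 : φ 0 = 0)
    (hd : ∀ s ∈ Icc (0:ℝ) δ, HasDerivAt φ (φ' s) s)
    (hb : ∀ s ∈ Icc (0:ℝ) δ, |φ' s| ≤ K * s ^ m) :
    ∀ t ∈ Icc (0:ℝ) δ, |φ t| ≤ K * t ^ (m + 1) := by
  intro t ht
  have h1 : ∀ s ∈ Icc (0:ℝ) t, HasDerivWithinAt φ (φ' s) (Icc 0 t) s := fun s hs =>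
    (hd s ⟨hs.1, hs.2.trans ht.2⟩).hasDerivWithinAt
  have h2 : ∀ s ∈ Ico (0:ℝ) t, ‖φ' s‖ ≤ K * t ^ m := by
    intro s hs
    rw [Real.norm_eq_abs]
    refine (hb s ⟨hs.1, hs.2.le.trans ht.2⟩).trans ?_
    gcongr
    exacts [hs.1, hs.2.le]
  have h3 := norm_image_sub_le_of_norm_deriv_le_segment' h1 h2 t (right_mem_Icc.2 ht.1)
  rw [hφ0, sub_zero, Real.norm_eq_abs] at h3
  calc |φ t| ≤ K * t ^ m * (t - 0) := h3
  _ = K * t ^ (m + 1) := by ring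

lemma core (x₀ r : ℝ) (hr : 0 < r) (f : ℝ → ℝ) (U : Set ℝ) (hU : IsOpen U)
    (hball : Metric.ball x₀ r ⊆ U) (hf : ContDiffOn ℝ 4 f U) :
    ∃ C > 0, ∀ t ∈ Icc (0:ℝ) (r/4),
      |(-1) * (∫ x in x₀..(x₀+2*t), f x) + 8 * (∫ x in x₀..(x₀+1*t), f x)
        + (-8) * (∫ x in x₀..(x₀+(-1)*t), f x) + 1 * (∫ x in x₀..(x₀+(-2)*t), f x)
        + (-12) * (t * f x₀)| ≤ C * t ^ 5 := by
  set δ := r/4 with hδdef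
  have hδ0 : 0 < δ := by positivity
  -- membership facts
  have habs : ∀ c t : ℝ, |c| ≤ 2 → t ∈ Icc (0:ℝ) δ → |c * t| ≤ r/2 := by
    intro c t hc ht
    rw [abs_mul]
    have h1 : |t| ≤ δ := by rw [abs_of_nonneg ht.1]; exact ht.2
    calc |c| * |t| ≤ 2 * δ := by
          apply mul_le_mul hc h1 (abs_nonneg t) (by norm_num)
    _ = r/2 := by rw [hδdef]; ring
  have hmem : ∀ c t : ℝ, |c| ≤ 2 → t ∈ Icc (0:ℝ) δ → x₀ + c * t ∈ U := by
    intro c t hc ht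
    apply hball
    rw [Metric.mem_ball, Real.dist_eq, add_sub_cancel_left]
    calc |c * t| ≤ r/2 := habs c t hc ht
    _ < r := by linarith
  have hseg : ∀ c t : ℝ, |c| ≤ 2 → t ∈ Icc (0:ℝ) δ → uIcc x₀ (x₀ + c * t) ⊆ U := by
    intro c t hc ht y hy
    apply hball
    rw [Metric.mem_ball, Real.dist_eq]
    have h1 : |c * t| ≤ r/2 := habs c t hc ht
    have h2 : |y - x₀| ≤ |c * t| := by
      rcases mem_uIcc.1 hy with ⟨ha, hb⟩ | ⟨ha, hb⟩ <;>
      · rw [abs_le]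
        constructor <;> nlinarith [neg_abs_le (c * t), le_abs_self (c * t)]
    linarith
  -- iterated derivatives
  set d1 := deriv f with hd1def
  set d2 := deriv d1 with hd2def
  set d3 := deriv d2 with hd3def
  set d4 := deriv d3 with hd4def
  have hc1 : ContDiffOn ℝ 3 d1 U := hf.deriv_of_isOpen hU (by norm_num)
  have hc2 : ContDiffOn ℝ 2 d2 U := hc1.deriv_of_isOpen hU (by norm_num)
  have hc3 : ContDiffOn ℝ 1 d3 U := hc2.deriv_of_isOpen hU (by norm_num)
  have hc4 : ContinuousOn d4 U := hc3.continuousOn_deriv_of_isOpen hU (le_refl _)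
  have hfc : ContinuousOn f U := hf.continuousOn
  have hdf : ∀ y ∈ U, HasDerivAt f (d1 y) y := fun y hy =>
    ((hf.differentiableOn (by norm_num)).differentiableAt (hU.mem_nhds hy)).hasDerivAt
  have hdd1 : ∀ y ∈ U, HasDerivAt d1 (d2 y) y := fun y hy =>
    ((hc1.differentiableOn (by norm_num)).differentiableAt (hU.mem_nhds hy)).hasDerivAt
  have hdd2 : ∀ y ∈ U, HasDerivAt d2 (d3 y) y := fun y hy =>
    ((hc2.differentiableOn (by norm_num)).differentiableAt (hU.mem_nhds hy)).hasDerivAt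
  have hdd3 : ∀ y ∈ U, HasDerivAt d3 (d4 y) y := fun y hy =>
    ((hc3.differentiableOn (by norm_num)).differentiableAt (hU.mem_nhds hy)).hasDerivAt
  -- chain rule helper
  have comp : ∀ (F F' : ℝ → ℝ), (∀ y ∈ U, HasDerivAt F (F' y) y) →
      ∀ (c : ℝ), |c| ≤ 2 → ∀ t ∈ Icc (0:ℝ) δ,
      HasDerivAt (fun s : ℝ => F (x₀ + c * s)) (F' (x₀ + c * t) * c) t := by
    intro F F' hF c hc t ht
    have hin : HasDerivAt (fun s : ℝ => x₀ + c * s) c t := by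
      simpa using ((hasDerivAt_id t).const_mul c).const_add x₀
    simpa [Function.comp_def] using (hF _ (hmem c t hc ht)).comp t hin
  -- the function g
  set g : ℝ → ℝ := fun y => ∫ x in x₀..y, f x with hgdef
  have hdg : ∀ c t : ℝ, |c| ≤ 2 → t ∈ Icc (0:ℝ) δ →
      HasDerivAt (fun s : ℝ => g (x₀ + c * s)) (f (x₀ + c * t) * c) t := by
    intro c t hc ht
    have hin : HasDerivAt (fun s : ℝ => x₀ + c * s) c t := by
      simpa using ((hasDerivAt_id t).const_mul c).const_add x₀
    have hG : HasDerivAt g (f (x₀ + c * t)) (x₀ + c * t) := by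
      apply intervalIntegral.integral_hasDerivAt_right
      · exact (hfc.mono (hseg c t hc ht)).intervalIntegrable
      · exact ContinuousOn.stronglyMeasurableAtFilter hU hfc _ (hmem c t hc ht)
      · exact hfc.continuousAt (hU.mem_nhds (hmem c t hc ht))
    simpa [Function.comp_def] using hG.comp t hin
  -- bound for the 4th level
  set I : Set ℝ := Icc (x₀ - r/2) (x₀ + r/2) with hIdef
  have hIU : I ⊆ U := by
    intro y hy
    apply hball
    rw [Metric.mem_ball, Real.dist_eq]
    rw [hIdef, mem_Icc] at hy
    rw [abs_lt]
    constructor <;> linarith [hy.1, hy.2]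
  have hmemI : ∀ c t : ℝ, |c| ≤ 2 → t ∈ Icc (0:ℝ) δ → x₀ + c * t ∈ I := by
    intro c t hc ht
    have h1 := habs c t hc ht
    rw [abs_le] at h1
    rw [hIdef, mem_Icc]
    constructor <;> linarith [h1.1, h1.2]
  obtain ⟨B, hB⟩ := isCompact_Icc.exists_bound_of_continuousOn (hc4.mono hIU)
  have hB0 : 0 ≤ B := le_trans (norm_nonneg _) (hB x₀ (by rw [mem_Icc]; constructor <;> linarith))
  set C : ℝ := 80 * B + 1 with hCdef
  have hC0 : (0:ℝ) < C := by positivity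
  -- level 4 bound
  have hb4 : ∀ s ∈ Icc (0:ℝ) δ, |(-32) * d4 (x₀ + 2*s) + 8 * d4 (x₀ + 1*s)
      + 8 * d4 (x₀ + (-1)*s) + (-32) * d4 (x₀ + (-2)*s)| ≤ C * s ^ 0 := by
    intro s hs
    have b1 := hB _ (hmemI 2 s (by norm_num) hs)
    have b2 := hB _ (hmemI 1 s (by norm_num) hs)
    have b3 := hB _ (hmemI (-1) s (by norm_num) hs)
    have b4 := hB _ (hmemI (-2) s (by norm_num) hs)
    rw [Real.norm_eq_abs, abs_le] at b1 b2 b3 b4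
    rw [pow_zero, mul_one, abs_le]
    constructor <;> [nlinarith [b1.1, b1.2, b2.1, b2.2, b3.1, b3.2, b4.1, b4.2];
      nlinarith [b1.1, b1.2, b2.1, b2.2, b3.1, b3.2, b4.1, b4.2]]
  -- level 3
  have hb3 : ∀ t ∈ Icc (0:ℝ) δ, |(-16) * d3 (x₀ + 2*t) + 8 * d3 (x₀ + 1*t)
      + (-8) * d3 (x₀ + (-1)*t) + 16 * d3 (x₀ + (-2)*t)| ≤ C * t ^ 1 := by
    refine mvt_pow_step hC0.le (by norm_num) ?_ hb4
    intro s hs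
    have H := ((((comp d3 d4 hdd3 2 (by norm_num) s hs).const_mul (-16)).add
      ((comp d3 d4 hdd3 1 (by norm_num) s hs).const_mul 8)).add
      ((comp d3 d4 hdd3 (-1) (by norm_num) s hs).const_mul (-8))).add
      ((comp d3 d4 hdd3 (-2) (by norm_num) s hs).const_mul 16)
    refine H.congr_deriv ?_
    ring
  -- level 2
  have hb2 : ∀ t ∈ Icc (0:ℝ) δ, |(-8) * d2 (x₀ + 2*t) + 8 * d2 (x₀ + 1*t)
      + 8 * d2 (x₀ + (-1)*t) + (-8) * d2 (x₀ + (-2)*t)| ≤ C * t ^ 2 := by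
    refine mvt_pow_step hC0.le (by norm_num) ?_ hb3
    intro s hs
    have H := ((((comp d2 d3 hdd2 2 (by norm_num) s hs).const_mul (-8)).add
      ((comp d2 d3 hdd2 1 (by norm_num) s hs).const_mul 8)).add
      ((comp d2 d3 hdd2 (-1) (by norm_num) s hs).const_mul 8)).add
      ((comp d2 d3 hdd2 (-2) (by norm_num) s hs).const_mul (-8))
    refine H.congr_deriv ?_
    ring
  -- level 1
  have hb1 : ∀ t ∈ Icc (0:ℝ) δ, |(-4) * d1 (x₀ + 2*t) + 8 * d1 (x₀ + 1*t)
      + (-8) * d1 (x₀ + (-1)*t) + 4 * d1 (x₀ + (-2)*t)| ≤ C * t ^ 3 := by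
    refine mvt_pow_step hC0.le (by norm_num) ?_ hb2
    intro s hs
    have H := ((((comp d1 d2 hdd1 2 (by norm_num) s hs).const_mul (-4)).add
      ((comp d1 d2 hdd1 1 (by norm_num) s hs).const_mul 8)).add
      ((comp d1 d2 hdd1 (-1) (by norm_num) s hs).const_mul (-8))).add
      ((comp d1 d2 hdd1 (-2) (by norm_num) s hs).const_mul 4)
    refine H.congr_deriv ?_
    ring
  -- level 0
  have hb0 : ∀ t ∈ Icc (0:ℝ) δ, |(-2) * f (x₀ + 2*t) + 8 * f (x₀ + 1*t)
      + 8 * f (x₀ + (-1)*t) + (-2) * f (x₀ + (-2)*t) + (-12) * f x₀| ≤ C * t ^ 4 := by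
    refine mvt_pow_step hC0.le (by simp only [mul_zero, add_zero, zero_mul]; ring) ?_ hb1
    intro s hs
    have H := (((((comp f d1 hdf 2 (by norm_num) s hs).const_mul (-2)).add
      ((comp f d1 hdf 1 (by norm_num) s hs).const_mul 8)).add
      ((comp f d1 hdf (-1) (by norm_num) s hs).const_mul 8)).add
      ((comp f d1 hdf (-2) (by norm_num) s hs).const_mul (-2))).add_const ((-12) * f x₀)
    refine H.congr_deriv ?_
    ring
  -- level Φ
  refine ⟨C, hC0, ?_⟩
  refine mvt_pow_step hC0.le (by simp only [mul_zero, add_zero, zero_mul]; ring) ?_ hb0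
  intro s hs
  have H := (((((hdg 2 s (by norm_num) hs).const_mul (-1)).add
    ((hdg 1 s (by norm_num) hs).const_mul 8)).add
    ((hdg (-1) s (by norm_num) hs).const_mul (-8))).add
    ((hdg (-2) s (by norm_num) hs).const_mul 1)).add
    (((hasDerivAt_id s).mul_const (f x₀)).const_mul (-12))
  refine H.congr_deriv ?_
  ring

/-- Fourth-order cell-average-to-face-average conversion:
`f(x₀) = (1/12)(−A₁ + 7A₀ + 7A₋₁ − A₋₂) + O(h⁴)`. -/
theorem face_value_from_cell_averages_fourth_order
    (x₀ : ℝ) (f : ℝ → ℝ)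
    (U : Set ℝ) (hU : IsOpen U) (hx : x₀ ∈ U) (hf : ContDiffOn ℝ 4 f U) :
    ∃ M > 0, ∃ h₀ > 0, ∀ h : ℝ, 0 < h → h < h₀ →
      |f x₀ - (1 / 12) * (-(cellAvg f x₀ h 1) + 7 * cellAvg f x₀ h 0
        + 7 * cellAvg f x₀ h (-1) - cellAvg f x₀ h (-2))| ≤ M * h ^ 4 := by
  obtain ⟨r, hr, hball⟩ := Metric.isOpen_iff.1 hU x₀ hx
  obtain ⟨C, hC0, hcore⟩ := core x₀ r hr f U hU hball hf
  refine ⟨C / 12 + 1, by positivity, r / 4, by positivity, ?_⟩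
  intro h hh0 hhδ
  have ht : h ∈ Icc (0:ℝ) (r/4) := ⟨hh0.le, hhδ.le⟩
  have hbd := hcore h ht
  have hfc : ContinuousOn f U := hf.continuousOn
  have hint : ∀ c : ℝ, |c| ≤ 2 → IntervalIntegrable f volume x₀ (x₀ + c * h) := by
    intro c hc
    apply ContinuousOn.intervalIntegrable
    apply hfc.mono
    intro y hy
    apply hball
    rw [Metric.mem_ball, Real.dist_eq]
    have h1 : |c * h| ≤ r/2 := by
      rw [abs_mul, abs_of_nonneg hh0.le]
      calc |c| * h ≤ 2 * (r/4) := by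
            apply mul_le_mul hc hhδ.le hh0.le (by norm_num)
      _ = r/2 := by ring
    have h2 : |y - x₀| ≤ |c * h| := by
      rcases mem_uIcc.1 hy with ⟨ha, hb⟩ | ⟨ha, hb⟩ <;>
      · rw [abs_le]
        constructor <;> nlinarith [neg_abs_le (c * h), le_abs_self (c * h)]
    linarith
  have key : ∀ c₁ c₂ : ℝ, |c₁| ≤ 2 → |c₂| ≤ 2 →
      (∫ x in (x₀ + c₁ * h)..(x₀ + c₂ * h), f x)
        = (∫ x in x₀..(x₀ + c₂ * h), f x) - (∫ x in x₀..(x₀ + c₁ * h), f x) :=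
    fun c₁ c₂ h1 h2 => (integral_interval_sub_left (hint c₂ h2) (hint c₁ h1)).symm
  have hG0 : (∫ x in x₀..(x₀ + 0 * h), f x) = 0 := by
    rw [show x₀ + 0 * h = x₀ by ring, integral_same]
  have e1 : cellAvg f x₀ h 1 = (1/h) * ((∫ x in x₀..(x₀ + 2 * h), f x)
      - (∫ x in x₀..(x₀ + 1 * h), f x)) := by
    rw [cellAvg]
    push_cast
    rw [show x₀ + (1 + 1) * h = x₀ + 2 * h by ring, key 1 2 (by norm_num) (by norm_num)]
  have e0 : cellAvg f x₀ h 0 = (1/h) * (∫ x in x₀..(x₀ + 1 * h), f x) := by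
    rw [cellAvg]
    push_cast
    rw [show x₀ + (0 + 1) * h = x₀ + 1 * h by ring,
      key 0 1 (by norm_num) (by norm_num), hG0, sub_zero]
  have em1 : cellAvg f x₀ h (-1) = (1/h) * (-(∫ x in x₀..(x₀ + (-1) * h), f x)) := by
    rw [cellAvg]
    push_cast
    rw [show x₀ + (-1 + 1) * h = x₀ + 0 * h by ring,
      key (-1) 0 (by norm_num) (by norm_num), hG0, zero_sub]
  have em2 : cellAvg f x₀ h (-2) = (1/h) * ((∫ x in x₀..(x₀ + (-1) * h), f x)
      - (∫ x in x₀..(x₀ + (-2) * h), f x)) := by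
    rw [cellAvg]
    push_cast
    rw [show x₀ + (-2 + 1) * h = x₀ + (-1) * h by ring,
      key (-2) (-1) (by norm_num) (by norm_num)]
  have hne : h ≠ 0 := ne_of_gt hh0
  have target_eq : f x₀ - (1 / 12) * (-(cellAvg f x₀ h 1) + 7 * cellAvg f x₀ h 0
      + 7 * cellAvg f x₀ h (-1) - cellAvg f x₀ h (-2))
      = -((-1) * (∫ x in x₀..(x₀ + 2 * h), f x) + 8 * (∫ x in x₀..(x₀ + 1 * h), f x)
        + (-8) * (∫ x in x₀..(x₀ + (-1) * h), f x) + 1 * (∫ x in x₀..(x₀ + (-2) * h), f x)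
        + (-12) * (h * f x₀)) / (12 * h) := by
    rw [e1, e0, em1, em2]
    field_simp
    ring
  rw [target_eq, abs_div, abs_neg, abs_of_pos (show (0:ℝ) < 12 * h by linarith)]
  calc |(-1) * (∫ x in x₀..(x₀ + 2 * h), f x) + 8 * (∫ x in x₀..(x₀ + 1 * h), f x)
        + (-8) * (∫ x in x₀..(x₀ + (-1) * h), f x) + 1 * (∫ x in x₀..(x₀ + (-2) * h), f x)
        + (-12) * (h * f x₀)| / (12 * h) ≤ (C * h ^ 5) / (12 * h) := by
        gcongr
  _ = (C / 12) * h ^ 4 := by field_simp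
  _ ≤ (C / 12 + 1) * h ^ 4 := by nlinarith [pow_nonneg hh0.le 4]
end

section
/- Fix x₀ ∈ ℝ and let f : ℝ → ℝ be of class C⁵ on an open neighborhood of x₀. Then, with A_j := (1/h) ∫_{x₀+jh}^{x₀+(j+1)h} f(x) dx, one has f'(x₀) = (1/(12h))·(−A₁ + 15A₀ − 15A₋₁ + A₋₂) + O(h⁴) as h → 0⁺. -/
open Set MeasureTheory intervalIntegral

/-- One step of the iterated mean-value estimate. -/
lemma mvt_chain {g g' : ℝ → ℝ} {x₀ r C : ℝ} (hC : 0 ≤ C) (hr : 0 ≤ r)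
    (hg : ∀ y ∈ Icc (x₀ - r) (x₀ + r), HasDerivAt g (g' y) y)
    (hb : ∀ y ∈ Icc (x₀ - r) (x₀ + r), |g' y| ≤ C) (h0 : g x₀ = 0) :
    ∀ y ∈ Icc (x₀ - r) (x₀ + r), |g y| ≤ C * r := by
  intro y hy
  have hx0 : x₀ ∈ Icc (x₀ - r) (x₀ + r) := ⟨by linarith, by linarith⟩
  have hB : ∀ z ∈ Icc (x₀ - r) (x₀ + r), ‖g' z‖ ≤ C := by
    intro z hz; simpa [Real.norm_eq_abs] using hb z hz
  have := (convex_Icc (x₀ - r) (x₀ + r)).norm_image_sub_le_of_norm_hasDerivWithin_le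
    (fun z hz => (hg z hz).hasDerivWithinAt) hB hx0 hy
  rw [h0, sub_zero] at this
  have h2 : |y - x₀| ≤ r := by
    rw [abs_le]; exact ⟨by linarith [hy.1], by linarith [hy.2]⟩
  calc |g y| ≤ C * |y - x₀| := by simpa [Real.norm_eq_abs] using this
    _ ≤ C * r := by nlinarith [abs_nonneg (y - x₀)]

lemma key_pow (x₀ : ℝ) (n : ℕ) (x : ℝ) :
    HasDerivAt (fun y : ℝ => (y - x₀) ^ n) ((n : ℝ) * (x - x₀) ^ (n - 1)) x := by
  have := ((hasDerivAt_pow n (x - x₀)).comp x ((hasDerivAt_id x).sub_const x₀))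
  simp only [mul_one] at this
  exact this

noncomputable def tpoly (x₀ p0 p1 p2 p3 p4 : ℝ) : ℝ → ℝ := fun x =>
  p0 + p1 * (x - x₀) ^ 1 + p2 / 2 * (x - x₀) ^ 2 + p3 / 6 * (x - x₀) ^ 3
    + p4 / 24 * (x - x₀) ^ 4

noncomputable def qpoly (x₀ p0 p1 p2 p3 p4 : ℝ) : ℝ → ℝ := fun x =>
  p0 * (x - x₀) ^ 1 + p1 / 2 * (x - x₀) ^ 2 + p2 / 6 * (x - x₀) ^ 3
    + p3 / 24 * (x - x₀) ^ 4 + p4 / 120 * (x - x₀) ^ 5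

lemma tpoly_continuous (x₀ p0 p1 p2 p3 p4 : ℝ) : Continuous (tpoly x₀ p0 p1 p2 p3 p4) := by
  unfold tpoly; continuity

lemma hasDerivAt_qpoly (x₀ p0 p1 p2 p3 p4 x : ℝ) :
    HasDerivAt (qpoly x₀ p0 p1 p2 p3 p4) (tpoly x₀ p0 p1 p2 p3 p4 x) x := by
  unfold qpoly tpoly
  have H := (((((key_pow x₀ 1 x).const_mul p0).add ((key_pow x₀ 2 x).const_mul (p1 / 2))).add
      ((key_pow x₀ 3 x).const_mul (p2 / 6))).add
      ((key_pow x₀ 4 x).const_mul (p3 / 24))).add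
      ((key_pow x₀ 5 x).const_mul (p4 / 120))
  refine H.congr_deriv ?_
  push_cast
  ring

lemma remainder_bound (f : ℝ → ℝ) (x₀ K r : ℝ) (hK : 0 ≤ K) (hr : 0 ≤ r)
    (hd : ∀ k : ℕ, k < 5 → ∀ x ∈ Icc (x₀ - r) (x₀ + r),
      HasDerivAt (iteratedDeriv k f) (iteratedDeriv (k + 1) f x) x)
    (hb : ∀ x ∈ Icc (x₀ - r) (x₀ + r), |iteratedDeriv 5 f x| ≤ K) :
    ∀ x ∈ Icc (x₀ - r) (x₀ + r),
      |f x - tpoly x₀ (f x₀) (deriv f x₀) (iteratedDeriv 2 f x₀) (iteratedDeriv 3 f x₀)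
        (iteratedDeriv 4 f x₀) x| ≤ K * r ^ 5 := by
  set D2 := iteratedDeriv 2 f x₀ with hD2
  set D3 := iteratedDeriv 3 f x₀ with hD3
  set D4 := iteratedDeriv 4 f x₀ with hD4
  have hd0 : ∀ x ∈ Icc (x₀ - r) (x₀ + r), HasDerivAt f (deriv f x) x := by
    intro x hx
    have := hd 0 (by norm_num) x hx
    rwa [iteratedDeriv_zero, iteratedDeriv_one] at this
  have hd1 : ∀ x ∈ Icc (x₀ - r) (x₀ + r), HasDerivAt (deriv f) (iteratedDeriv 2 f x) x := by
    intro x hx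
    have := hd 1 (by norm_num) x hx
    rwa [iteratedDeriv_one] at this
  -- level 4
  have b4 : ∀ y ∈ Icc (x₀ - r) (x₀ + r), |iteratedDeriv 4 f y - D4| ≤ K * r := by
    apply mvt_chain hK hr (g' := iteratedDeriv 5 f)
    · intro y hy
      exact ((hd 4 (by norm_num) y hy).sub_const D4)
    · exact hb
    · simp [hD4]
  -- level 3
  have b3 : ∀ y ∈ Icc (x₀ - r) (x₀ + r),
      |iteratedDeriv 3 f y - (D3 + D4 * (y - x₀) ^ 1)| ≤ K * r * r := by
    apply mvt_chain (by positivity) hr (g' := fun y => iteratedDeriv 4 f y - D4)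
    · intro y hy
      have hp := ((key_pow x₀ 1 y).const_mul D4).const_add D3
      have := (hd 3 (by norm_num) y hy).sub hp
      refine this.congr_deriv ?_
      push_cast; ring
    · exact b4
    · simp [hD3]
  -- level 2
  have b2 : ∀ y ∈ Icc (x₀ - r) (x₀ + r),
      |iteratedDeriv 2 f y - (D2 + D3 * (y - x₀) ^ 1 + D4 / 2 * (y - x₀) ^ 2)|
        ≤ K * r * r * r := by
    apply mvt_chain (by positivity) hr
      (g' := fun y => iteratedDeriv 3 f y - (D3 + D4 * (y - x₀) ^ 1))
    · intro y hy
      have hp := (((key_pow x₀ 1 y).const_mul D3).const_add D2).add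
          ((key_pow x₀ 2 y).const_mul (D4 / 2))
      have := (hd 2 (by norm_num) y hy).sub hp
      refine this.congr_deriv ?_
      push_cast; ring
    · exact b3
    · simp [hD2]
  -- level 1
  have b1 : ∀ y ∈ Icc (x₀ - r) (x₀ + r),
      |deriv f y - (deriv f x₀ + D2 * (y - x₀) ^ 1 + D3 / 2 * (y - x₀) ^ 2
        + D4 / 6 * (y - x₀) ^ 3)| ≤ K * r * r * r * r := by
    apply mvt_chain (by positivity) hr
      (g' := fun y => iteratedDeriv 2 f y - (D2 + D3 * (y - x₀) ^ 1 + D4 / 2 * (y - x₀) ^ 2))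
    · intro y hy
      have hp := ((((key_pow x₀ 1 y).const_mul D2).const_add (deriv f x₀)).add
          ((key_pow x₀ 2 y).const_mul (D3 / 2))).add ((key_pow x₀ 3 y).const_mul (D4 / 6))
      have := (hd1 y hy).sub hp
      refine this.congr_deriv ?_
      push_cast; ring
    · exact b2
    · simp
  -- level 0
  have b0 : ∀ y ∈ Icc (x₀ - r) (x₀ + r),
      |f y - tpoly x₀ (f x₀) (deriv f x₀) D2 D3 D4 y| ≤ K * r * r * r * r * r := by
    apply mvt_chain (by positivity) hr
      (g' := fun y => deriv f y - (deriv f x₀ + D2 * (y - x₀) ^ 1 + D3 / 2 * (y - x₀) ^ 2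
        + D4 / 6 * (y - x₀) ^ 3))
    · intro y hy
      have hp := (((((key_pow x₀ 1 y).const_mul (deriv f x₀)).const_add (f x₀)).add
          ((key_pow x₀ 2 y).const_mul (D2 / 2))).add
          ((key_pow x₀ 3 y).const_mul (D3 / 6))).add ((key_pow x₀ 4 y).const_mul (D4 / 24))
      have := (hd0 y hy).sub hp
      unfold tpoly
      refine this.congr_deriv ?_
      push_cast; ring
    · exact b1
    · unfold tpoly; simp
  intro x hx
  calc |f x - tpoly x₀ (f x₀) (deriv f x₀) D2 D3 D4 x| ≤ K * r * r * r * r * r := b0 x hx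
    _ = K * r ^ 5 := by ring

set_option maxHeartbeats 2000000 in
/-- Fourth-order formula for the face value of the derivative from cell averages:
`f'(x₀) = (1/(12h))(−A₁ + 15A₀ − 15A₋₁ + A₋₂) + O(h⁴)`. -/
theorem face_derivative_from_cell_averages_fourth_order
    (x₀ : ℝ) (f : ℝ → ℝ)
    (U : Set ℝ) (hU : IsOpen U) (hx : x₀ ∈ U) (hf : ContDiffOn ℝ 5 f U) :
    ∃ M > 0, ∃ h₀ > 0, ∀ h : ℝ, 0 < h → h < h₀ →
      |deriv f x₀ - (1 / (12 * h)) * (-(cellAvg f x₀ h 1) + 15 * cellAvg f x₀ h 0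
        - 15 * cellAvg f x₀ h (-1) + cellAvg f x₀ h (-2))| ≤ M * h ^ 4 := by
  -- a closed interval around x₀ inside U
  obtain ⟨ε, hε, hball⟩ := Metric.isOpen_iff.mp hU x₀ hx
  set δ := ε / 2 with hδdef
  have hδ : 0 < δ := by positivity
  have hδU : Icc (x₀ - δ) (x₀ + δ) ⊆ U := by
    intro y hy
    apply hball
    rw [Metric.mem_ball, Real.dist_eq, abs_lt]
    constructor
    · have := hy.1; simp only [hδdef] at *; linarith
    · have := hy.2; simp only [hδdef] at *; linarith
  -- iterated derivatives within = global on U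
  have heq : ∀ (k : ℕ), Set.EqOn (iteratedDerivWithin k f U) (iteratedDeriv k f) U := by
    intro k y hy
    rw [iteratedDerivWithin_eq_iteratedFDerivWithin, iteratedDeriv_eq_iteratedFDeriv,
      iteratedFDerivWithin_of_isOpen k hU hy]
  -- continuity of the 5th derivative and a bound K on the compact interval
  have hcont : ContinuousOn (iteratedDeriv 5 f) U :=
    (hf.continuousOn_iteratedDerivWithin (by norm_num) hU.uniqueDiffOn).congr
      (fun y hy => ((heq 5) hy).symm)
  obtain ⟨K, hK⟩ := (isCompact_Icc (a := x₀ - δ) (b := x₀ + δ)).exists_bound_of_continuousOn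
    (hcont.mono hδU)
  have hx₀I : x₀ ∈ Icc (x₀ - δ) (x₀ + δ) := ⟨by linarith, by linarith⟩
  have hK0 : 0 ≤ K := le_trans (norm_nonneg _) (hK x₀ hx₀I)
  -- differentiability of iterated derivatives on U
  have hd : ∀ k : ℕ, k < 5 → ∀ x ∈ U,
      HasDerivAt (iteratedDeriv k f) (iteratedDeriv (k + 1) f x) x := by
    intro k hk x hxU
    have h1 : DifferentiableOn ℝ (iteratedDerivWithin k f U) U :=
      hf.differentiableOn_iteratedDerivWithin (by exact_mod_cast hk) hU.uniqueDiffOn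
    have h2 : DifferentiableAt ℝ (iteratedDeriv k f) x :=
      (h1.differentiableAt (hU.mem_nhds hxU)).congr_of_eventuallyEq
        (Filter.eventuallyEq_of_mem (hU.mem_nhds hxU) fun y hy => ((heq k) hy).symm)
    rw [iteratedDeriv_succ]
    exact h2.hasDerivAt
  refine ⟨86 * K + 1, by positivity, δ / 2, by positivity, ?_⟩
  intro h hh hhδ
  set s : Set ℝ := Icc (x₀ - 2 * h) (x₀ + 2 * h) with hsdef
  have hsub : s ⊆ Icc (x₀ - δ) (x₀ + δ) := by
    intro y hy
    exact ⟨by have := hy.1; simp only [hsdef, mem_Icc] at *; linarith,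
           by have := hy.2; simp only [hsdef, mem_Icc] at *; linarith⟩
  have hsubU : s ⊆ U := fun y hy => hδU (hsub hy)
  set T : ℝ → ℝ := tpoly x₀ (f x₀) (deriv f x₀) (iteratedDeriv 2 f x₀) (iteratedDeriv 3 f x₀)
    (iteratedDeriv 4 f x₀) with hTdef
  set Q : ℝ → ℝ := qpoly x₀ (f x₀) (deriv f x₀) (iteratedDeriv 2 f x₀) (iteratedDeriv 3 f x₀)
    (iteratedDeriv 4 f x₀) with hQdef
  have hR : ∀ x ∈ s, |f x - T x| ≤ K * (2 * h) ^ 5 :=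
    remainder_bound f x₀ K (2 * h) hK0 (by linarith)
      (fun k hk x hxs => hd k hk x (hsubU hxs)) (fun x hxs => hK x (hsub hxs))
  -- integral of f over subintervals of s
  have hcell : ∀ a b : ℝ, a ∈ s → b ∈ s →
      (∫ x in a..b, f x) = (Q b - Q a) + ∫ x in a..b, (f x - T x) := by
    intro a b ha hb
    have huIcc : Set.uIcc a b ⊆ s := by
      rw [hsdef, ← uIcc_of_le (by linarith : x₀ - 2 * h ≤ x₀ + 2 * h)]
      exact uIcc_subset_uIcc (by rwa [uIcc_of_le (by linarith), ← hsdef])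
        (by rwa [uIcc_of_le (by linarith), ← hsdef])
    have hfi : IntervalIntegrable f volume a b :=
      (hf.continuousOn.mono (fun y hy => hsubU (huIcc hy))).intervalIntegrable
    have hTi : IntervalIntegrable T volume a b :=
      (tpoly_continuous x₀ _ _ _ _ _).intervalIntegrable a b
    have hRi : IntervalIntegrable (fun x => f x - T x) volume a b := hfi.sub hTi
    have h1 : (∫ x in a..b, f x) = (∫ x in a..b, T x) + ∫ x in a..b, (f x - T x) := by
      rw [← intervalIntegral.integral_add hTi hRi]
      apply intervalIntegral.integral_congr
      intro y _; ring
    rw [h1, intervalIntegral.integral_eq_sub_of_hasDerivAt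
      (fun y _ => hasDerivAt_qpoly x₀ _ _ _ _ _ y) hTi]
  -- membership of the grid points
  have hmem : ∀ t : ℝ, -2 ≤ t → t ≤ 2 → x₀ + t * h ∈ s := by
    intro t h1 h2
    rw [hsdef, mem_Icc]
    constructor <;> nlinarith
  -- split each cell average
  have key2 : ∀ j : ℤ, (-2) ≤ j → j ≤ 1 →
      cellAvg f x₀ h j = (1 / h) * ((Q (x₀ + ((j : ℝ) + 1) * h) - Q (x₀ + (j : ℝ) * h))
        + ∫ x in (x₀ + (j : ℝ) * h)..(x₀ + ((j : ℝ) + 1) * h), (f x - T x)) := by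
    intro j hj1 hj2
    have hj1' : (-2 : ℝ) ≤ (j : ℝ) := by exact_mod_cast hj1
    have hj2' : (j : ℝ) ≤ 1 := by exact_mod_cast hj2
    unfold cellAvg
    rw [hcell _ _ (hmem _ (by linarith) (by linarith)) (hmem _ (by linarith) (by linarith))]
  -- bound on each remainder integral
  have hbnd : ∀ j : ℤ, (-2) ≤ j → j ≤ 1 →
      |∫ x in (x₀ + (j : ℝ) * h)..(x₀ + ((j : ℝ) + 1) * h), (f x - T x)| ≤ K * (2 * h) ^ 5 * h := by
    intro j hj1 hj2
    have hj1' : (-2 : ℝ) ≤ (j : ℝ) := by exact_mod_cast hj1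
    have hj2' : (j : ℝ) ≤ 1 := by exact_mod_cast hj2
    have hab : x₀ + (j : ℝ) * h ≤ x₀ + ((j : ℝ) + 1) * h := by nlinarith
    have := intervalIntegral.norm_integral_le_of_norm_le_const
      (C := K * (2 * h) ^ 5) (f := fun x => f x - T x)
      (a := x₀ + (j : ℝ) * h) (b := x₀ + ((j : ℝ) + 1) * h) ?_
    · rw [Real.norm_eq_abs] at this
      calc |∫ x in (x₀ + (j : ℝ) * h)..(x₀ + ((j : ℝ) + 1) * h), (f x - T x)|
          ≤ K * (2 * h) ^ 5 * |x₀ + ((j : ℝ) + 1) * h - (x₀ + (j : ℝ) * h)| := this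
        _ = K * (2 * h) ^ 5 * h := by
            rw [show x₀ + ((j : ℝ) + 1) * h - (x₀ + (j : ℝ) * h) = h by ring, abs_of_pos hh]
    · intro y hy
      rw [uIoc_of_le hab] at hy
      have hys : y ∈ s := by
        have h1 := hy.1; have h2 := hy.2
        rw [hsdef, mem_Icc]
        constructor <;> nlinarith
      simpa [Real.norm_eq_abs] using hR y hys
  -- put everything together
  set a1 := ∫ x in (x₀ + ((1 : ℤ) : ℝ) * h)..(x₀ + (((1 : ℤ) : ℝ) + 1) * h), (f x - T x) with ha1
  set a0 := ∫ x in (x₀ + ((0 : ℤ) : ℝ) * h)..(x₀ + (((0 : ℤ) : ℝ) + 1) * h), (f x - T x) with ha0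
  set am1 := ∫ x in (x₀ + ((-1 : ℤ) : ℝ) * h)..(x₀ + (((-1 : ℤ) : ℝ) + 1) * h), (f x - T x) with ham1
  set am2 := ∫ x in (x₀ + ((-2 : ℤ) : ℝ) * h)..(x₀ + (((-2 : ℤ) : ℝ) + 1) * h), (f x - T x) with ham2
  have e1 := key2 1 (by norm_num) (by norm_num)
  have e0 := key2 0 (by norm_num) (by norm_num)
  have em1 := key2 (-1) (by norm_num) (by norm_num)
  have em2 := key2 (-2) (by norm_num) (by norm_num)
  have hb1 := hbnd 1 (by norm_num) (by norm_num)
  have hb0 := hbnd 0 (by norm_num) (by norm_num)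
  have hbm1 := hbnd (-1) (by norm_num) (by norm_num)
  have hbm2 := hbnd (-2) (by norm_num) (by norm_num)
  rw [← ha1] at e1 hb1
  rw [← ha0] at e0 hb0
  rw [← ham1] at em1 hbm1
  rw [← ham2] at em2 hbm2
  have final_eq : deriv f x₀ - (1 / (12 * h)) * (-(cellAvg f x₀ h 1) + 15 * cellAvg f x₀ h 0
      - 15 * cellAvg f x₀ h (-1) + cellAvg f x₀ h (-2))
      = -(1 / (12 * (h * h))) * (-a1 + 15 * a0 - 15 * am1 + am2) := by
    rw [e1, e0, em1, em2, hQdef]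
    simp only [qpoly]
    push_cast
    field_simp
    ring
  rw [final_eq, abs_mul, abs_neg,
    abs_of_pos (show (0 : ℝ) < 1 / (12 * (h * h)) by positivity)]
  have hcombo : |(-a1 + 15 * a0 - 15 * am1 + am2)| ≤ 32 * (K * (2 * h) ^ 5 * h) := by
    have h1 := abs_le.mp hb1
    have h0 := abs_le.mp hb0
    have hm1 := abs_le.mp hbm1
    have hm2 := abs_le.mp hbm2
    rw [abs_le]
    constructor <;> [linarith [h1.1, h1.2, h0.1, h0.2, hm1.1, hm1.2, hm2.1, hm2.2];
      linarith [h1.1, h1.2, h0.1, h0.2, hm1.1, hm1.2, hm2.1, hm2.2]]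
  calc (1 / (12 * (h * h))) * |(-a1 + 15 * a0 - 15 * am1 + am2)|
      ≤ (1 / (12 * (h * h))) * (32 * (K * (2 * h) ^ 5 * h)) := by
        apply mul_le_mul_of_nonneg_left hcombo (by positivity)
    _ = 256 / 3 * K * h ^ 4 := by field_simp; ring
    _ ≤ (86 * K + 1) * h ^ 4 := by nlinarith [pow_nonneg hh.le 4, mul_nonneg hK0 (pow_nonneg hh.le 4)]
end

section
/- Fix x₀ ∈ ℝ and let f : ℝ → ℝ be of class C⁵ on an open neighborhood of x₀. Then, with A_j := (1/h) ∫_{x₀+jh}^{x₀+(j+1)h} f(x) dx, one has (1/h) ∫_{x₀}^{x₀+h} f'(x) dx = (1/(12h))·(−A₂ + 8A₁ − 8A₋₁ + A₋₂) + O(h⁴) as h → 0⁺; equivalently, (f(x₀+h) − f(x₀))/h equals the displayed combination of cell averages up to O(h⁴). -/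
open Set MeasureTheory intervalIntegral

lemma diffOn_iter (f : ℝ → ℝ) (U : Set ℝ) (hU : IsOpen U) (hf : ContDiffOn ℝ 5 f U)
    (k : ℕ) (hk : k < 5) : DifferentiableOn ℝ (iteratedDeriv k f) U := by
  have h1 : EqOn (iteratedDerivWithin k f U) (iteratedDeriv k f) U := by
    intro x hx
    rw [iteratedDerivWithin_eq_iteratedFDerivWithin, iteratedDeriv_eq_iteratedFDeriv,
      iteratedFDerivWithin_of_isOpen k hU hx]
  have h2 : DifferentiableOn ℝ (iteratedDerivWithin k f U) U :=
    hf.differentiableOn_iteratedDerivWithin (by exact_mod_cast hk) hU.uniqueDiffOn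
  exact h2.congr fun x hx => (h1 hx).symm

lemma iterWithin_eq (f : ℝ → ℝ) (U : Set ℝ) (hU : IsOpen U) (hf : ContDiffOn ℝ 5 f U)
    (a b : ℝ) (hab : a < b) (hsub : Icc a b ⊆ U) :
    ∀ k, k ≤ 5 → ∀ x ∈ Icc a b, iteratedDerivWithin k f (Icc a b) x = iteratedDeriv k f x := by
  intro k
  induction k with
  | zero => intro _ x hx; simp [iteratedDerivWithin_zero]
  | succ k ih =>
    intro hk x hx
    have hk5 : k < 5 := by omega
    rw [iteratedDerivWithin_succ]
    have hcongr : derivWithin (iteratedDerivWithin k f (Icc a b)) (Icc a b) x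
        = derivWithin (iteratedDeriv k f) (Icc a b) x :=
      derivWithin_congr (fun y hy => ih (by omega) y hy) (ih (by omega) x hx)
    rw [hcongr]
    have hdiff : DifferentiableAt ℝ (iteratedDeriv k f) x :=
      (diffOn_iter f U hU hf k hk5).differentiableAt (hU.mem_nhds (hsub hx))
    rw [hdiff.derivWithin ((uniqueDiffOn_Icc hab) x hx), iteratedDeriv_succ]

/-- one-sided taylor bound, rewritten explicitly. -/
lemma taylor_explicit (f : ℝ → ℝ) (U : Set ℝ) (hU : IsOpen U) (hf : ContDiffOn ℝ 5 f U)
    (x₀ b : ℝ) (hab : x₀ < b) (hsub : Icc x₀ b ⊆ U) :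
    ∃ C, ∀ x ∈ Icc x₀ b,
      |f x - (iteratedDeriv 0 f x₀ + iteratedDeriv 1 f x₀ * (x - x₀)
        + iteratedDeriv 2 f x₀ / 2 * (x - x₀)^2 + iteratedDeriv 3 f x₀ / 6 * (x - x₀)^3
        + iteratedDeriv 4 f x₀ / 24 * (x - x₀)^4)| ≤ C * (x - x₀)^5 := by
  have hf5 : ContDiffOn ℝ (4+1 : ℕ) f (Icc x₀ b) := by
    exact_mod_cast hf.mono hsub
  obtain ⟨C, hC⟩ := exists_taylor_mean_remainder_bound hab.le hf5
  refine ⟨C, fun x hx => ?_⟩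
  have := hC x hx
  rw [taylor_within_apply] at this
  have heq := iterWithin_eq f U hU hf x₀ b hab hsub
  simp only [Finset.sum_range_succ, Finset.sum_range_zero,
    heq 0 (by norm_num) x₀ (left_mem_Icc.2 hab.le),
    heq 1 (by norm_num) x₀ (left_mem_Icc.2 hab.le),
    heq 2 (by norm_num) x₀ (left_mem_Icc.2 hab.le),
    heq 3 (by norm_num) x₀ (left_mem_Icc.2 hab.le),
    heq 4 (by norm_num) x₀ (left_mem_Icc.2 hab.le),
    smul_eq_mul, Nat.factorial] at this
  calc |f x - _| = ‖f x - _‖ := (Real.norm_eq_abs _).symm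
    _ ≤ C * (x - x₀)^5 := by convert this using 3; rfl; simp only [Nat.succ_eq_add_one]; push_cast; ring

/-- two-sided taylor bound -/
lemma taylor_two_sided (f : ℝ → ℝ) (U : Set ℝ) (hU : IsOpen U) (hf : ContDiffOn ℝ 5 f U)
    (x₀ r : ℝ) (hr : 0 < r) (hsub : Icc (x₀ - r) (x₀ + r) ⊆ U) :
    ∃ K, 0 ≤ K ∧ ∀ x ∈ Icc (x₀ - r) (x₀ + r),
      |f x - (iteratedDeriv 0 f x₀ + iteratedDeriv 1 f x₀ * (x - x₀)
        + iteratedDeriv 2 f x₀ / 2 * (x - x₀)^2 + iteratedDeriv 3 f x₀ / 6 * (x - x₀)^3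
        + iteratedDeriv 4 f x₀ / 24 * (x - x₀)^4)| ≤ K * |x - x₀|^5 := by
  -- right side
  obtain ⟨C₁, hC₁⟩ := taylor_explicit f U hU hf x₀ (x₀ + r) (by linarith)
    (fun y hy => hsub ⟨by linarith [hy.1], hy.2⟩)
  -- left side : g t := f (2*x₀ - t)
  set g : ℝ → ℝ := fun t => f (2 * x₀ - t) with hg
  have hmap : MapsTo (fun t : ℝ => 2 * x₀ - t) ((fun t : ℝ => 2 * x₀ - t) ⁻¹' U) U :=
    fun y hy => hy
  have hUopen : IsOpen ((fun t : ℝ => 2 * x₀ - t) ⁻¹' U) :=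
    hU.preimage (by continuity)
  have hgc : ContDiffOn ℝ 5 g ((fun t : ℝ => 2 * x₀ - t) ⁻¹' U) :=
    hf.comp ((contDiff_const.sub contDiff_id).contDiffOn) hmap
  have hsub' : Icc x₀ (x₀ + r) ⊆ (fun t : ℝ => 2 * x₀ - t) ⁻¹' U := by
    intro y hy
    simp only [mem_preimage]
    exact hsub ⟨by linarith [hy.2], by linarith [hy.1]⟩
  obtain ⟨C₂, hC₂⟩ := taylor_explicit g _ hUopen hgc x₀ (x₀ + r) (by linarith) hsub'
  -- iterated derivs of g at x₀
  have hgk : ∀ k : ℕ, iteratedDeriv k g x₀ = (-1 : ℝ)^k * iteratedDeriv k f x₀ := by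
    intro k
    have hge : g = (fun x : ℝ => (fun z => f (2 * x₀ + z)) (-x)) := by
      funext t; simp only [hg]; ring_nf
    have h1 : iteratedDeriv k (fun x : ℝ => (fun z => f (2 * x₀ + z)) (-x)) x₀
        = (-1 : ℝ) ^ k • iteratedDeriv k (fun z => f (2 * x₀ + z)) (-x₀) :=
      iteratedDeriv_comp_neg k (fun z => f (2 * x₀ + z)) x₀
    have h2 := iteratedDeriv_comp_const_add k f (2 * x₀)
    rw [hge, h1, h2]
    simp only [smul_eq_mul]
    congr 2
    ring
  refine ⟨|C₁| + |C₂|, by positivity, fun x hx => ?_⟩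
  rcases le_or_gt x₀ x with hxx | hxx
  · have h1 := hC₁ x ⟨hxx, hx.2⟩
    have : (x - x₀)^5 = |x - x₀|^5 := by
      rw [abs_of_nonneg (by linarith)]
    rw [this] at h1
    have := mul_le_mul_of_nonneg_right (le_abs_self C₁) (pow_nonneg (abs_nonneg (x - x₀)) 5)
    have h0 := mul_nonneg (abs_nonneg C₂) (pow_nonneg (abs_nonneg (x - x₀)) 5)
    nlinarith
  · have hx' : 2 * x₀ - x ∈ Icc x₀ (x₀ + r) := ⟨by linarith, by linarith [hx.1]⟩
    have h2 := hC₂ (2 * x₀ - x) hx'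
    simp only [hgk, show (2 * x₀ - x) - x₀ = -(x - x₀) by ring] at h2
    have habs : (-(x - x₀))^5 = |x - x₀|^5 := by
      rw [abs_of_nonpos (by linarith : x - x₀ ≤ 0)]
    have hgval : g (2 * x₀ - x) = f x := by simp [hg]
    rw [hgval] at h2
    have hexp : (-1 : ℝ)^0 * iteratedDeriv 0 f x₀ + (-1:ℝ)^1 * iteratedDeriv 1 f x₀ * (-(x - x₀))
        + (-1:ℝ)^2 * iteratedDeriv 2 f x₀ / 2 * (-(x - x₀))^2
        + (-1:ℝ)^3 * iteratedDeriv 3 f x₀ / 6 * (-(x - x₀))^3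
        + (-1:ℝ)^4 * iteratedDeriv 4 f x₀ / 24 * (-(x - x₀))^4
        = iteratedDeriv 0 f x₀ + iteratedDeriv 1 f x₀ * (x - x₀)
        + iteratedDeriv 2 f x₀ / 2 * (x - x₀)^2 + iteratedDeriv 3 f x₀ / 6 * (x - x₀)^3
        + iteratedDeriv 4 f x₀ / 24 * (x - x₀)^4 := by ring
    rw [hexp, habs] at h2
    have := mul_le_mul_of_nonneg_right (le_abs_self C₂) (pow_nonneg (abs_nonneg (x - x₀)) 5)
    have h0 := mul_nonneg (abs_nonneg C₁) (pow_nonneg (abs_nonneg (x - x₀)) 5)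
    nlinarith

lemma poly_integral (a0 a1 a2 a3 a4 c u v : ℝ) :
    (∫ t in u..v, (a0 + a1*(t-c) + a2/2*(t-c)^2 + a3/6*(t-c)^3 + a4/24*(t-c)^4))
    = (a0*(v-c) + a1*(v-c)^2/2 + a2/2*(v-c)^3/3 + a3/6*(v-c)^4/4 + a4/24*(v-c)^5/5)
    - (a0*(u-c) + a1*(u-c)^2/2 + a2/2*(u-c)^3/3 + a3/6*(u-c)^4/4 + a4/24*(u-c)^5/5) := by
  set G : ℝ → ℝ := fun t =>
    a0*(t-c) + a1*(t-c)^2/2 + a2/2*(t-c)^3/3 + a3/6*(t-c)^4/4 + a4/24*(t-c)^5/5 with hG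
  have hderiv : ∀ t ∈ uIcc u v,
      HasDerivAt G (a0 + a1*(t-c) + a2/2*(t-c)^2 + a3/6*(t-c)^3 + a4/24*(t-c)^4) t := by
    intro t _
    have h1 : HasDerivAt (fun t : ℝ => t - c) 1 t := (hasDerivAt_id t).sub_const c
    have h2 := h1.pow 2
    have h3 := h1.pow 3
    have h4 := h1.pow 4
    have h5 := h1.pow 5
    have := (((((h1.const_mul a0).add ((h2.const_mul a1).div_const 2)).add
      (((h3.const_mul (a2/2))).div_const 3)).add
      (((h4.const_mul (a3/6))).div_const 4)).add
      (((h5.const_mul (a4/24))).div_const 5))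
    refine this.congr_deriv ?_
    push_cast
    ring
  rw [integral_eq_sub_of_hasDerivAt hderiv (by apply Continuous.intervalIntegrable; continuity)]

set_option maxHeartbeats 2000000 in
/-- Fourth-order accuracy of the discrete gradient operator `G`:
`(1/h) ∫_{x₀}^{x₀+h} f' = (1/(12h))(−A₂ + 8A₁ − 8A₋₁ + A₋₂) + O(h⁴)`. -/
theorem discrete_gradient_fourth_order
    (x₀ : ℝ) (f : ℝ → ℝ)
    (U : Set ℝ) (hU : IsOpen U) (hx : x₀ ∈ U) (hf : ContDiffOn ℝ 5 f U) :
    ∃ M > 0, ∃ h₀ > 0, ∀ h : ℝ, 0 < h → h < h₀ →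
      |(1 / h) * (∫ x in x₀..(x₀ + h), deriv f x)
        - (1 / (12 * h)) * (-(cellAvg f x₀ h 2) + 8 * cellAvg f x₀ h 1
          - 8 * cellAvg f x₀ h (-1) + cellAvg f x₀ h (-2))| ≤ M * h ^ 4 := by
  obtain ⟨ε, hε, hball⟩ := Metric.isOpen_iff.1 hU x₀ hx
  set δ := ε / 4 with hδdef
  have hδ0 : 0 < δ := by positivity
  have hsubU : Icc (x₀ - 3*δ) (x₀ + 3*δ) ⊆ U := by
    intro y hy
    apply hball
    rw [Metric.mem_ball, Real.dist_eq, abs_lt]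
    constructor
    · have := hy.1; simp only [hδdef] at *; linarith
    · have := hy.2; simp only [hδdef] at *; linarith
  obtain ⟨K, hK0, hK⟩ := taylor_two_sided f U hU hf x₀ (3*δ) (by linarith) hsubU
  refine ⟨366*(K+1), by positivity, δ, hδ0, fun h h0 hh => ?_⟩
  set a0 := iteratedDeriv 0 f x₀ with ha0def
  set a1 := iteratedDeriv 1 f x₀
  set a2 := iteratedDeriv 2 f x₀
  set a3 := iteratedDeriv 3 f x₀
  set a4 := iteratedDeriv 4 f x₀
  have hne : h ≠ 0 := ne_of_gt h0
  have hIccIcc : Icc (x₀ - 3*h) (x₀ + 3*h) ⊆ Icc (x₀ - 3*δ) (x₀ + 3*δ) :=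
    Icc_subset_Icc (by linarith) (by linarith)
  -- the FTC step
  have hFTC : (∫ x in x₀..(x₀ + h), deriv f x) = f (x₀ + h) - f x₀ := by
    apply integral_deriv_eq_sub
    · intro x hxmem
      rw [uIcc_of_le (by linarith)] at hxmem
      have hxU : x ∈ U := hsubU ⟨by linarith [hxmem.1], by linarith [hxmem.2]⟩
      exact ((hf.contDiffAt (hU.mem_nhds hxU)).differentiableAt (by norm_num))
    · have hcont : ContinuousOn (deriv f) U := by
        have hd := diffOn_iter f U hU hf 1 (by norm_num)
        simpa [iteratedDeriv_one] using hd.continuousOn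
      apply (hcont.mono ?_).intervalIntegrable
      intro x hxmem
      rw [uIcc_of_le (by linarith)] at hxmem
      exact hsubU ⟨by linarith [hxmem.1], by linarith [hxmem.2]⟩
  -- remainder integral bound on subintervals
  have hrem : ∀ u v : ℝ, u ∈ Icc (x₀ - 3*h) (x₀ + 3*h) → v ∈ Icc (x₀ - 3*h) (x₀ + 3*h) →
      |(∫ x in u..v, f x) - ∫ t in u..v,
          (a0 + a1*(t-x₀) + a2/2*(t-x₀)^2 + a3/6*(t-x₀)^3 + a4/24*(t-x₀)^4)|
        ≤ (K * (3*h)^5) * |v - u| := by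
    intro u v hu hv
    have huIcc : uIcc u v ⊆ Icc (x₀ - 3*h) (x₀ + 3*h) := uIcc_subset_Icc hu hv
    have hintf : IntervalIntegrable f volume u v := by
      apply (hf.continuousOn.mono ?_).intervalIntegrable
      exact fun x hxm => hsubU (hIccIcc (huIcc hxm))
    have hintT : IntervalIntegrable
        (fun t => a0 + a1*(t-x₀) + a2/2*(t-x₀)^2 + a3/6*(t-x₀)^3 + a4/24*(t-x₀)^4)
        volume u v := by
      apply Continuous.intervalIntegrable; continuity
    rw [← integral_sub hintf hintT, ← Real.norm_eq_abs]
    apply intervalIntegral.norm_integral_le_of_norm_le_const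
    intro x hxm
    have hx3h : x ∈ Icc (x₀ - 3*h) (x₀ + 3*h) := huIcc (uIoc_subset_uIcc hxm)
    have hxabs : |x - x₀| ≤ 3*h := abs_le.2 ⟨by linarith [hx3h.1], by linarith [hx3h.2]⟩
    have hbound := hK x (hIccIcc hx3h)
    calc ‖f x - _‖ ≤ K * |x - x₀|^5 := hbound
      _ ≤ K * (3*h)^5 := by
          apply mul_le_mul_of_nonneg_left _ hK0
          exact pow_le_pow_left₀ (abs_nonneg _) hxabs 5
  have ha0 : f x₀ = a0 := by rw [ha0def, iteratedDeriv_zero]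
  -- Taylor remainder at `x₀ + h`
  obtain ⟨r, hrdef, hrbnd⟩ : ∃ r, f (x₀ + h)
      = (a0 + a1*h + a2/2*h^2 + a3/6*h^3 + a4/24*h^4) + r ∧ |r| ≤ K * h^5 := by
    refine ⟨f (x₀ + h) - (a0 + a1*h + a2/2*h^2 + a3/6*h^3 + a4/24*h^4), by ring, ?_⟩
    have hmem : x₀ + h ∈ Icc (x₀ - 3*δ) (x₀ + 3*δ) := ⟨by linarith, by linarith⟩
    have h2 := hK (x₀ + h) hmem
    have h5 : |x₀ + h - x₀| = h := by rw [add_sub_cancel_left]; exact abs_of_pos h0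
    rw [h5] at h2
    refine le_trans (le_of_eq ?_) h2
    congr 1
    ring
  -- cell remainders
  have hcell : ∀ u v : ℝ, u ∈ Icc (x₀ - 3*h) (x₀ + 3*h) → v ∈ Icc (x₀ - 3*h) (x₀ + 3*h) →
      v - u = h →
      ∃ ρ, (∫ x in u..v, f x) = (∫ t in u..v,
          (a0 + a1*(t-x₀) + a2/2*(t-x₀)^2 + a3/6*(t-x₀)^3 + a4/24*(t-x₀)^4)) + ρ
        ∧ |ρ| ≤ (K * (3*h)^5) * h := by
    intro u v hu hv huv
    refine ⟨(∫ x in u..v, f x) - ∫ t in u..v,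
      (a0 + a1*(t-x₀) + a2/2*(t-x₀)^2 + a3/6*(t-x₀)^3 + a4/24*(t-x₀)^4), by ring, ?_⟩
    have := hrem u v hu hv
    rw [huv, abs_of_pos h0] at this
    exact this
  obtain ⟨ρ2, hS2, hB2⟩ := hcell (x₀ + 2*h) (x₀ + 3*h)
    ⟨by linarith, by linarith⟩ ⟨by linarith, by linarith⟩ (by ring)
  obtain ⟨ρ1, hS1, hB1⟩ := hcell (x₀ + h) (x₀ + 2*h)
    ⟨by linarith, by linarith⟩ ⟨by linarith, by linarith⟩ (by ring)
  obtain ⟨ρm1, hSm1, hBm1⟩ := hcell (x₀ - h) x₀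
    ⟨by linarith, by linarith⟩ ⟨by linarith, by linarith⟩ (by ring)
  obtain ⟨ρm2, hSm2, hBm2⟩ := hcell (x₀ - 2*h) (x₀ - h)
    ⟨by linarith, by linarith⟩ ⟨by linarith, by linarith⟩ (by ring)
  -- rewrite the cell averages
  have hc2 : cellAvg f x₀ h 2 = (1/h) * ∫ x in (x₀ + 2*h)..(x₀ + 3*h), f x := by
    simp only [cellAvg]; norm_num
  have hc1 : cellAvg f x₀ h 1 = (1/h) * ∫ x in (x₀ + h)..(x₀ + 2*h), f x := by
    simp only [cellAvg]; norm_num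
  have hcm1 : cellAvg f x₀ h (-1) = (1/h) * ∫ x in (x₀ - h)..x₀, f x := by
    simp only [cellAvg]; norm_num [sub_eq_add_neg]
  have hcm2 : cellAvg f x₀ h (-2) = (1/h) * ∫ x in (x₀ - 2*h)..(x₀ - h), f x := by
    simp only [cellAvg]; norm_num [sub_eq_add_neg]
  -- the exact algebraic identity
  have hEeq : (1 / h) * (∫ x in x₀..(x₀ + h), deriv f x)
        - (1 / (12 * h)) * (-(cellAvg f x₀ h 2) + 8 * cellAvg f x₀ h 1
          - 8 * cellAvg f x₀ h (-1) + cellAvg f x₀ h (-2))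
      = (12*h*r - (-ρ2 + 8*ρ1 - 8*ρm1 + ρm2)) / (12*h^2) := by
    rw [hFTC, hc2, hc1, hcm1, hcm2, hrdef, ha0, hS2, hS1, hSm1, hSm2,
      poly_integral a0 a1 a2 a3 a4 x₀ (x₀+2*h) (x₀+3*h),
      poly_integral a0 a1 a2 a3 a4 x₀ (x₀+h) (x₀+2*h),
      poly_integral a0 a1 a2 a3 a4 x₀ (x₀-h) x₀,
      poly_integral a0 a1 a2 a3 a4 x₀ (x₀-2*h) (x₀-h)]
    field_simp
    ring
  rw [hEeq, abs_div, abs_of_pos (by positivity : (0:ℝ) < 12*h^2), div_le_iff₀ (by positivity)]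
  have hNbound : |12*h*r - (-ρ2 + 8*ρ1 - 8*ρm1 + ρm2)| ≤ 4386*K*h^6 := by
    have e1 : |12*h*r| = 12*h*|r| := by
      rw [abs_mul, abs_of_nonneg (by positivity : (0:ℝ) ≤ 12*h)]
    have e2 : |(-ρ2 + 8*ρ1 - 8*ρm1 + ρm2)| ≤ 18*((K * (3*h)^5) * h) := by
      have b2 := abs_le.1 hB2; have b1 := abs_le.1 hB1
      have bm1 := abs_le.1 hBm1; have bm2 := abs_le.1 hBm2
      apply abs_le.2
      constructor
      · linarith [b2.1, b2.2, b1.1, b1.2, bm1.1, bm1.2, bm2.1, bm2.2]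
      · linarith [b2.1, b2.2, b1.1, b1.2, bm1.1, bm1.2, bm2.1, bm2.2]
    calc |12*h*r - (-ρ2 + 8*ρ1 - 8*ρm1 + ρm2)|
        ≤ |12*h*r| + |(-ρ2 + 8*ρ1 - 8*ρm1 + ρm2)| := abs_sub _ _
      _ ≤ 12*h*(K*h^5) + 18*((K * (3*h)^5) * h) := by
          rw [e1]
          have := mul_le_mul_of_nonneg_left hrbnd (by positivity : (0:ℝ) ≤ 12*h)
          linarith [e2]
      _ = 4386*K*h^6 := by ring
  calc |12*h*r - (-ρ2 + 8*ρ1 - 8*ρm1 + ρm2)| ≤ 4386*K*h^6 := hNbound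
    _ ≤ 366*(K+1)*h^4 * (12*h^2) := by nlinarith [pow_nonneg h0.le 6, pow_pos h0 6]
end

section
/- Fix x₀ ∈ ℝ and let f : ℝ → ℝ be of class C⁶ on an open neighborhood of x₀. Then, with A_j := (1/h) ∫_{x₀+jh}^{x₀+(j+1)h} f(x) dx, one has (1/h) ∫_{x₀}^{x₀+h} f''(x) dx = (1/(12h²))·(−A₂ + 16A₁ − 30A₀ + 16A₋₁ − A₋₂) + O(h⁴) as h → 0⁺. -/
open Set Finset

private lemma abs_sub_le_of_mem_uIcc {x y t : ℝ} (ht : t ∈ Set.uIcc x y) : |t - x| ≤ |y - x| := by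
  rcases Set.mem_uIcc.mp ht with ⟨h1, h2⟩ | ⟨h1, h2⟩
  · rw [abs_of_nonneg (by linarith)]
    calc t - x ≤ y - x := by linarith
      _ ≤ |y - x| := le_abs_self _
  · rw [abs_of_nonpos (by linarith)]
    calc -(t - x) ≤ -(y - x) := by linarith
      _ ≤ |y - x| := neg_le_abs _

private lemma taylor_bound (C : ℝ) :
    ∀ (n : ℕ) (g : ℕ → ℝ → ℝ) (s : Set ℝ), Convex ℝ s →
    (∀ k ≤ n, ∀ x ∈ s, HasDerivAt (g k) (g (k+1) x) x) →
    (∀ x ∈ s, |g (n+1) x| ≤ C) →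
    ∀ x ∈ s, ∀ y ∈ s,
      |g 0 y - ∑ k ∈ Finset.range (n+1), g k x * (y - x)^k / (k.factorial : ℝ)|
        ≤ C * |y - x|^(n+1) := by
  intro n
  induction n with
  | zero =>
    intro g s hconv hderiv hC x hx y hy
    have h0 : ∑ k ∈ Finset.range 1, g k x * (y - x)^k / (k.factorial : ℝ) = g 0 x := by
      simp
    rw [h0]
    have := Convex.norm_image_sub_le_of_norm_hasDerivWithin_le
      (f := g 0) (f' := g 1) (s := s) (C := C)
      (fun t ht => (hderiv 0 le_rfl t ht).hasDerivWithinAt)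
      (fun t ht => by simpa [Real.norm_eq_abs] using hC t ht) hconv hx hy
    simpa [Real.norm_eq_abs] using this
  | succ n ih =>
    intro g s hconv hderiv hC x hx y hy
    have hC0 : 0 ≤ C := le_trans (abs_nonneg _) (hC x hx)
    set φ : ℝ → ℝ := fun t => g 0 t - ∑ k ∈ Finset.range (n+2), g k x * (t - x)^k / (k.factorial : ℝ) with hφ
    set φ' : ℝ → ℝ := fun t => g 1 t - ∑ k ∈ Finset.range (n+1), g (k+1) x * (t - x)^k / (k.factorial : ℝ) with hφ'
    have hφx : φ x = 0 := by
      simp only [hφ, Finset.sum_range_succ']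
      simp [Nat.factorial]
    have hder : ∀ t ∈ s, HasDerivAt φ (φ' t) t := by
      intro t ht
      have h1 : HasDerivAt (g 0) (g 1 t) t := hderiv 0 (by omega) t ht
      have h2 : HasDerivAt (fun u => ∑ k ∈ Finset.range (n+2), g k x * (u - x)^k / (k.factorial : ℝ))
          (∑ k ∈ Finset.range (n+2), g k x * ((k : ℝ) * (t - x)^(k-1)) / (k.factorial : ℝ)) t := by
        apply HasDerivAt.fun_sum
        intro k hk
        have hpow : HasDerivAt (fun u : ℝ => (u - x)^k) ((k : ℝ) * (t-x)^(k-1)) t := by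
          simpa [Function.comp_def] using ((hasDerivAt_pow k (t - x)).comp t ((hasDerivAt_id t).sub_const x))
        simpa [mul_div_assoc] using (hpow.const_mul (g k x)).div_const (k.factorial : ℝ)
      have h3 := h1.fun_sub h2
      refine h3.congr_deriv (Eq.symm ?_)
      simp only [hφ']
      congr 1
      conv_rhs => rw [Finset.sum_range_succ']
      simp only [Nat.cast_zero, zero_mul, mul_zero, zero_div, add_zero]
      apply Finset.sum_congr rfl
      intro k _
      rw [Nat.factorial_succ]
      have hk0 : ((k.factorial : ℝ)) ≠ 0 := Nat.cast_ne_zero.mpr k.factorial_ne_zero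
      have hk1 : ((k:ℝ) + 1) ≠ 0 := by positivity
      push_cast
      field_simp
    have ihb : ∀ t ∈ s, |φ' t| ≤ C * |t - x|^(n+1) := by
      intro t ht
      exact ih (fun k => g (k+1)) s hconv (fun k hk => hderiv (k+1) (by omega)) (fun z hz => hC z hz) x hx t ht
    have hsub : Set.uIcc x y ⊆ s := hconv.ordConnected.uIcc_subset hx hy
    have key := Convex.norm_image_sub_le_of_norm_hasDerivWithin_le
      (f := φ) (f' := φ') (s := Set.uIcc x y) (C := C * |y - x|^(n+1))
      (fun t ht => ((hder t (hsub ht)).hasDerivWithinAt))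
      (fun t ht => by
        rw [Real.norm_eq_abs]
        calc |φ' t| ≤ C * |t - x|^(n+1) := ihb t (hsub ht)
          _ ≤ C * |y - x|^(n+1) := by
              apply mul_le_mul_of_nonneg_left _ hC0
              exact pow_le_pow_left₀ (abs_nonneg _) (abs_sub_le_of_mem_uIcc ht) _)
      (convex_uIcc x y) Set.left_mem_uIcc Set.right_mem_uIcc
    calc |g 0 y - ∑ k ∈ Finset.range (n+1+1), g k x * (y - x)^k / (k.factorial : ℝ)|
        = ‖φ y - φ x‖ := by rw [hφx, sub_zero]; rfl
      _ ≤ C * |y - x|^(n+1) * ‖y - x‖ := key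
      _ = C * |y - x|^(n+1+1) := by rw [Real.norm_eq_abs, pow_succ]; ring
open Set MeasureTheory intervalIntegral

set_option maxHeartbeats 2000000 in
/-- Fourth-order accuracy of the one-dimensional discrete Laplacian `L`:
`(1/h) ∫_{x₀}^{x₀+h} f'' = (1/(12h²))(−A₂ + 16A₁ − 30A₀ + 16A₋₁ − A₋₂) + O(h⁴)`. -/
theorem discrete_laplacian_fourth_order
    (x₀ : ℝ) (f : ℝ → ℝ)
    (U : Set ℝ) (hU : IsOpen U) (hx : x₀ ∈ U) (hf : ContDiffOn ℝ 6 f U) :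
    ∃ M > 0, ∃ h₀ > 0, ∀ h : ℝ, 0 < h → h < h₀ →
      |(1 / h) * (∫ x in x₀..(x₀ + h), deriv (deriv f) x)
        - (1 / (12 * h ^ 2)) * (-(cellAvg f x₀ h 2) + 16 * cellAvg f x₀ h 1
          - 30 * cellAvg f x₀ h 0 + 16 * cellAvg f x₀ h (-1)
          - cellAvg f x₀ h (-2))| ≤ M * h ^ 4 := by
  obtain ⟨δ, hδ, hball⟩ := Metric.isOpen_iff.mp hU x₀ hx
  set s : Set ℝ := Metric.ball x₀ δ with hs_def
  have hsU : s ⊆ U := hball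
  set sb : Set ℝ := Metric.ball x₀ (δ/2) with hsb_def
  have hsbs : sb ⊆ s := Metric.ball_subset_ball (by linarith)
  have hsbU : sb ⊆ U := fun t ht => hsU (hsbs ht)
  have hx₀s : x₀ ∈ s := Metric.mem_ball_self hδ
  have hx₀sb : x₀ ∈ sb := Metric.mem_ball_self (by linarith)
  -- smoothness of iterated derivatives
  have cD : ∀ k : ℕ, k ≤ 6 → ContDiffOn ℝ (6 - k : ℕ) (deriv^[k] f) U := by
    intro k hk
    induction k with
    | zero => simpa using hf
    | succ n ih =>
      have h1 : ContDiffOn ℝ (6 - n : ℕ) (deriv^[n] f) U := ih (by omega)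
      have h2 : ContDiffOn ℝ (6 - (n+1) : ℕ) (deriv (deriv^[n] f)) U := by
        apply h1.deriv_of_isOpen hU
        have he : (6 - (n+1) : ℕ) + 1 = (6 - n : ℕ) := by omega
        rw [← he]
        push_cast
        exact le_refl _
      rw [Function.iterate_succ_apply']
      exact h2
  have hchain : ∀ k : ℕ, k ≤ 5 → ∀ x ∈ U, HasDerivAt (deriv^[k] f) (deriv^[k+1] f x) x := by
    intro k hk x hxU
    have h1 : ContDiffOn ℝ (6 - k : ℕ) (deriv^[k] f) U := cD k (by omega)
    have hone : (1 : WithTop ℕ∞) ≤ ((6 - k : ℕ) : WithTop ℕ∞) := by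
      have : 1 ≤ (6 - k : ℕ) := by omega
      exact_mod_cast this
    have h2 : DifferentiableOn ℝ (deriv^[k] f) U := h1.differentiableOn (by exact_mod_cast (show (6 - k : ℕ) ≠ 0 by omega))
    have h3 : DifferentiableAt ℝ (deriv^[k] f) x := (h2 x hxU).differentiableAt (hU.mem_nhds hxU)
    rw [Function.iterate_succ_apply']
    exact h3.hasDerivAt
  have hcont : ∀ k : ℕ, k ≤ 6 → ContinuousOn (deriv^[k] f) U := fun k hk => (cD k hk).continuousOn
  -- bound on the sixth derivative
  have hKU : Metric.closedBall x₀ (δ/2) ⊆ U := fun t ht =>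
    hball (lt_of_le_of_lt (Metric.mem_closedBall.mp ht) (by linarith))
  obtain ⟨C, hCbd⟩ := (isCompact_closedBall x₀ (δ/2)).exists_bound_of_continuousOn
    ((hcont 6 le_rfl).mono hKU)
  have hC0 : 0 ≤ C := le_trans (norm_nonneg _) (hCbd x₀ (Metric.mem_closedBall_self (by linarith)))
  have hCb : ∀ t ∈ sb, |deriv^[6] f t| ≤ C := fun t ht =>
    hCbd t (Metric.ball_subset_closedBall ht)
  -- the antiderivative F
  set F : ℝ → ℝ := fun x => ∫ t in x₀..x, f t with hF_def
  have hfc : ContinuousOn f s := hf.continuousOn.mono hsU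
  have hFint : ∀ a ∈ s, IntervalIntegrable f volume x₀ a := fun a ha =>
    (hfc.mono ((convex_ball x₀ δ).ordConnected.uIcc_subset hx₀s ha)).intervalIntegrable
  have hFd : ∀ x ∈ s, HasDerivAt F (f x) x := by
    intro x hxs
    apply intervalIntegral.integral_hasDerivAt_right (hFint x hxs)
    · exact ContinuousOn.stronglyMeasurableAtFilter Metric.isOpen_ball hfc x hxs
    · exact hfc.continuousAt (Metric.isOpen_ball.mem_nhds hxs)
  -- Taylor for F (order 6)
  obtain ⟨gF, hg0, hgs⟩ : ∃ g : ℕ → ℝ → ℝ, g 0 = F ∧ ∀ j, g (j+1) = deriv^[j] f :=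
    ⟨fun k => match k with | 0 => F | (j+1) => deriv^[j] f, rfl, fun j => rfl⟩
  have TF : ∀ y ∈ sb, |F y - ∑ k ∈ Finset.range 7, gF k x₀ * (y - x₀)^k / (k.factorial : ℝ)|
      ≤ C * |y - x₀|^7 := by
    intro y hy
    have := taylor_bound C 6 gF sb (convex_ball _ _)
      (fun k hk x hxsb => by
        match k, hk with
        | 0, _ => rw [hg0, hgs 0]; simpa using hFd x (hsbs hxsb)
        | (j+1), hk => rw [hgs j, hgs (j+1)]; exact hchain j (by omega) x (hsbU hxsb))
      (fun x hxsb => by rw [hgs 6]; exact hCb x hxsb) x₀ hx₀sb y hy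
    rw [hg0] at this
    exact this
  -- Taylor for deriv f (order 4)
  have TP : ∀ y ∈ sb, |deriv f y - ∑ k ∈ Finset.range 5, deriv^[k+1] f x₀ * (y - x₀)^k / (k.factorial : ℝ)|
      ≤ C * |y - x₀|^5 := by
    intro y hy
    have := taylor_bound C 4 (fun k => deriv^[k+1] f) sb (convex_ball _ _)
      (fun k hk x hxsb => hchain (k+1) (by omega) x (hsbU hxsb))
      (fun x hxsb => hCb x hxsb) x₀ hx₀sb y hy
    simpa using this
  refine ⟨381*C + 1, by linarith, δ/8, by linarith, ?_⟩
  intro h hh0 hhδ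
  have hmem : ∀ a : ℝ, |a| ≤ 3*h → x₀ + a ∈ sb := by
    intro a ha
    rw [hsb_def, Metric.mem_ball, Real.dist_eq]
    have : x₀ + a - x₀ = a := by ring
    rw [this]
    linarith
  -- the integral of f''
  have hint : (∫ x in x₀..(x₀+h), deriv (deriv f) x) = deriv f (x₀+h) - deriv f x₀ := by
    apply intervalIntegral.integral_eq_sub_of_hasDerivAt
    · intro t ht
      have htsb : t ∈ sb := (convex_ball x₀ (δ/2)).ordConnected.uIcc_subset hx₀sb
        (hmem h (by rw [abs_of_pos hh0]; linarith)) ht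
      have := hchain 1 (by omega) t (hsbU htsb)
      have e1 : deriv^[1] f = deriv f := rfl
      have e2 : deriv^[2] f = deriv (deriv f) := rfl
      rw [e1, e2] at this
      exact this
    · apply ContinuousOn.intervalIntegrable
      have e2 : deriv^[2] f = deriv (deriv f) := rfl
      refine ContinuousOn.mono (e2 ▸ hcont 2 (by omega)) ?_
      refine subset_trans ?_ hsbU
      exact (convex_ball x₀ (δ/2)).ordConnected.uIcc_subset hx₀sb
        (hmem h (by rw [abs_of_pos hh0]; linarith))
  -- cell averages in terms of F
  have hcell : ∀ a b : ℝ, |a| ≤ 3*h → |b| ≤ 3*h →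
      (∫ x in (x₀+a)..(x₀+b), f x) = F (x₀+b) - F (x₀+a) := by
    intro a b ha hb
    exact (intervalIntegral.integral_interval_sub_left
      (hFint _ (hsbs (hmem b hb))) (hFint _ (hsbs (hmem a ha)))).symm
  have habs3 : |3*h| ≤ 3*h := by rw [abs_of_pos (by linarith)]
  have habs2 : |2*h| ≤ 3*h := by rw [abs_of_pos (by linarith)]; linarith
  have habs1 : |h| ≤ 3*h := by rw [abs_of_pos hh0]; linarith
  have habsm1 : |-h| ≤ 3*h := by rw [abs_neg, abs_of_pos hh0]; linarith
  have habsm2 : |(-2)*h| ≤ 3*h := by rw [show (-2)*h = -(2*h) by ring, abs_neg]; exact habs2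
  have e2 : cellAvg f x₀ h 2 = (1/h) * (F (x₀+3*h) - F (x₀+2*h)) := by
    unfold cellAvg
    push_cast
    rw [show ((2:ℝ)+1)*h = 3*h by ring, show x₀ + (2:ℝ)*h = x₀ + 2*h from rfl,
      hcell (2*h) (3*h) habs2 habs3]
  have e1 : cellAvg f x₀ h 1 = (1/h) * (F (x₀+2*h) - F (x₀+h)) := by
    unfold cellAvg
    push_cast
    rw [show ((1:ℝ)+1)*h = 2*h by ring, show x₀ + (1:ℝ)*h = x₀ + h by ring,
      hcell h (2*h) habs1 habs2]
  have e0 : cellAvg f x₀ h 0 = (1/h) * (F (x₀+h) - F x₀) := by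
    unfold cellAvg
    push_cast
    rw [show ((0:ℝ)+1)*h = h by ring, show x₀ + (0:ℝ)*h = x₀ + 0 by ring,
      hcell 0 h (by simpa using by linarith : |(0:ℝ)| ≤ 3*h) habs1]
    rw [show x₀ + (0:ℝ) = x₀ by ring]
  have em1 : cellAvg f x₀ h (-1) = (1/h) * (F x₀ - F (x₀+(-h))) := by
    unfold cellAvg
    push_cast
    rw [show ((-1:ℝ))*h = -h by ring, show ((-1:ℝ)+1)*h = 0 by ring,
      hcell (-h) 0 habsm1 (by simpa using by linarith : |(0:ℝ)| ≤ 3*h)]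
    rw [show x₀ + (0:ℝ) = x₀ by ring]
  have em2 : cellAvg f x₀ h (-2) = (1/h) * (F (x₀+(-h)) - F (x₀+(-2)*h)) := by
    unfold cellAvg
    push_cast
    rw [show ((-2:ℝ)+1)*h = -h by ring, hcell ((-2)*h) (-h) habsm2 habsm1]
  -- remainders
  set P : ℝ → ℝ := fun y => ∑ k ∈ Finset.range 5, deriv^[k+1] f x₀ * (y - x₀)^k / (k.factorial : ℝ) with hP_def
  set Q : ℝ → ℝ := fun y => ∑ k ∈ Finset.range 7, gF k x₀ * (y - x₀)^k / (k.factorial : ℝ) with hQ_def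
  set r1 : ℝ := deriv f (x₀+h) - P (x₀+h) with hr1_def
  set r0 : ℝ := deriv f x₀ - P x₀ with hr0_def
  set q3 : ℝ := F (x₀+3*h) - Q (x₀+3*h) with hq3_def
  set q2 : ℝ := F (x₀+2*h) - Q (x₀+2*h) with hq2_def
  set q1 : ℝ := F (x₀+h) - Q (x₀+h) with hq1_def
  set q0 : ℝ := F x₀ - Q x₀ with hq0_def
  set qm1 : ℝ := F (x₀+(-h)) - Q (x₀+(-h)) with hqm1_def
  set qm2 : ℝ := F (x₀+(-2)*h) - Q (x₀+(-2)*h) with hqm2_def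
  -- remainder bounds
  have hsimp : ∀ a : ℝ, x₀ + a - x₀ = a := fun a => by ring
  have br1 : |r1| ≤ C * h^5 := by
    have := TP (x₀+h) (hmem h habs1)
    rw [show |x₀ + h - x₀| = h by rw [hsimp h]; exact abs_of_pos hh0] at this
    exact this
  have br0 : |r0| ≤ 0 := by
    have := TP x₀ hx₀sb
    rw [show C * |x₀ - x₀|^5 = 0 by simp] at this
    exact this
  have bq3 : |q3| ≤ C * (3*h)^7 := by
    have := TF (x₀+3*h) (hmem (3*h) habs3)
    rw [show |x₀ + 3*h - x₀| = 3*h by rw [hsimp (3*h)]; exact abs_of_pos (by linarith)] at this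
    exact this
  have bq2 : |q2| ≤ C * (2*h)^7 := by
    have := TF (x₀+2*h) (hmem (2*h) habs2)
    rw [show |x₀ + 2*h - x₀| = 2*h by rw [hsimp (2*h)]; exact abs_of_pos (by linarith)] at this
    exact this
  have bq1 : |q1| ≤ C * h^7 := by
    have := TF (x₀+h) (hmem h habs1)
    rw [show |x₀ + h - x₀| = h by rw [hsimp h]; exact abs_of_pos hh0] at this
    exact this
  have bq0 : |q0| ≤ 0 := by
    have := TF x₀ hx₀sb
    rw [show C * |x₀ - x₀|^7 = 0 by simp] at this
    exact this
  have bqm1 : |qm1| ≤ C * h^7 := by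
    have := TF (x₀+(-h)) (hmem (-h) habsm1)
    rw [show |x₀ + (-h) - x₀| = h by rw [hsimp (-h), abs_neg]; exact abs_of_pos hh0] at this
    exact this
  have bqm2 : |qm2| ≤ C * (2*h)^7 := by
    have := TF (x₀+(-2)*h) (hmem ((-2)*h) habsm2)
    rw [show |x₀ + (-2)*h - x₀| = 2*h by
      rw [hsimp ((-2)*h), show (-2:ℝ)*h = -(2*h) by ring, abs_neg]
      exact abs_of_pos (by linarith)] at this
    exact this
  -- the key algebraic identity
  have hh : h ≠ 0 := ne_of_gt hh0
  have key : (1 / h) * (∫ x in x₀..(x₀ + h), deriv (deriv f) x)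
        - (1 / (12 * h ^ 2)) * (-(cellAvg f x₀ h 2) + 16 * cellAvg f x₀ h 1
          - 30 * cellAvg f x₀ h 0 + 16 * cellAvg f x₀ h (-1)
          - cellAvg f x₀ h (-2))
      = (1/h) * (r1 - r0)
        - (1/(12*h^3)) * (-q3 + 17*q2 - 46*q1 + 46*q0 - 17*qm1 + qm2) := by
    rw [hint, e2, e1, e0, em1, em2, hr1_def, hr0_def, hq3_def, hq2_def, hq1_def, hq0_def,
      hqm1_def, hqm2_def, hP_def, hQ_def]
    simp only [Finset.sum_range_succ, Finset.sum_range_zero, Nat.factorial]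
    push_cast
    rw [hg0]
    rw [show gF 1 = deriv^[0] f from hgs 0, show gF 2 = deriv^[1] f from hgs 1,
      show gF 3 = deriv^[2] f from hgs 2, show gF 4 = deriv^[3] f from hgs 3,
      show gF 5 = deriv^[4] f from hgs 4, show gF 6 = deriv^[5] f from hgs 5]
    have hFx₀ : F x₀ = 0 := by rw [hF_def]; simp
    rw [hFx₀]
    field_simp
    ring
  rw [key]
  -- final estimate
  have hcombo : |(-q3 + 17*q2 - 46*q1 + 46*q0 - 17*qm1 + qm2)| ≤ 4554 * C * h^7 := by
    have l3 := le_abs_self q3; have l3' := neg_abs_le q3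
    have l2 := le_abs_self q2; have l2' := neg_abs_le q2
    have l1 := le_abs_self q1; have l1' := neg_abs_le q1
    have l0 := le_abs_self q0; have l0' := neg_abs_le q0
    have lm1 := le_abs_self qm1; have lm1' := neg_abs_le qm1
    have lm2 := le_abs_self qm2; have lm2' := neg_abs_le qm2
    have c3 : C * (3*h)^7 = 2187 * C * h^7 := by ring
    have c2 : C * (2*h)^7 = 128 * C * h^7 := by ring
    rw [c3] at bq3
    rw [c2] at bq2
    rw [c2] at bqm2
    rw [abs_le]
    constructor <;> linarith
  have hr : |r1 - r0| ≤ C * h^5 := by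
    have l1 := le_abs_self r0; have l1' := neg_abs_le r0
    have l2 := le_abs_self r1; have l2' := neg_abs_le r1
    rw [abs_le]
    constructor <;> linarith
  have hX : |(1/h) * (r1 - r0)| ≤ C * h^4 := by
    rw [abs_mul, abs_of_pos (show (0:ℝ) < 1/h by positivity)]
    calc (1/h) * |r1 - r0| ≤ (1/h) * (C * h^5) :=
          mul_le_mul_of_nonneg_left hr (by positivity)
      _ = C * h^4 := by field_simp
  have hY : |(1/(12*h^3)) * (-q3 + 17*q2 - 46*q1 + 46*q0 - 17*qm1 + qm2)| ≤ 380 * C * h^4 := by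
    rw [abs_mul, abs_of_pos (show (0:ℝ) < 1/(12*h^3) by positivity)]
    calc (1/(12*h^3)) * |(-q3 + 17*q2 - 46*q1 + 46*q0 - 17*qm1 + qm2)|
        ≤ (1/(12*h^3)) * (4554 * C * h^7) :=
          mul_le_mul_of_nonneg_left hcombo (by positivity)
      _ = (4554/12) * C * h^4 := by field_simp
      _ ≤ 380 * C * h^4 := by nlinarith [pow_nonneg hh0.le 4]
  calc |(1/h) * (r1 - r0) - (1/(12*h^3)) * (-q3 + 17*q2 - 46*q1 + 46*q0 - 17*qm1 + qm2)|
      ≤ |(1/h) * (r1 - r0)| + |(1/(12*h^3)) * (-q3 + 17*q2 - 46*q1 + 46*q0 - 17*qm1 + qm2)| :=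
        abs_sub _ _
    _ ≤ C * h^4 + 380 * C * h^4 := add_le_add hX hY
    _ ≤ (381*C + 1) * h^4 := by nlinarith [pow_nonneg hh0.le 4]
end

section
/- Fix x₀ ∈ ℝ² and let u = (u₁, u₂) : ℝ² → ℝ² be of class C⁵ on an open neighborhood of x₀. For h > 0 and i = (i₁,i₂) ∈ ℤ², let C_i := x₀ + [i₁h, (i₁+1)h] × [i₂h, (i₂+1)h] and ⟨u_d⟩_i := (1/h²) ∫_{C_i} u_d. Then (1/(12h)) Σ_{d=1,2} (−⟨u_d⟩_{2e^d} + 8⟨u_d⟩_{e^d} − 8⟨u_d⟩_{−e^d} + ⟨u_d⟩_{−2e^d}) = (1/h²) ∫_{C_0} (∂u₁/∂x + ∂u₂/∂y) + O(h⁴) as h → 0⁺, where e¹ = (1,0), e² = (0,1), and C_0 is the cell with index (0,0). -/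
open Set MeasureTheory intervalIntegral

/-- The average of `f : ℝ² → ℝ` over the square cell
`[p + i₁h, p + (i₁+1)h] × [q + i₂h, q + (i₂+1)h]`, as an iterated integral. -/
noncomputable def cellAvg2 (f : ℝ → ℝ → ℝ) (p q h : ℝ) (i₁ i₂ : ℤ) : ℝ :=
  (1 / h ^ 2) * ∫ x in (p + (i₁ : ℝ) * h)..(p + ((i₁ : ℝ) + 1) * h),
    ∫ y in (q + (i₂ : ℝ) * h)..(q + ((i₂ : ℝ) + 1) * h), f x y



/-- partial derivative in the first coordinate direction -/
noncomputable def pderiv1 (f : ℝ × ℝ → ℝ) : ℝ × ℝ → ℝ := fun z => fderiv ℝ f z (1, 0)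

/-- iterated partial derivative in the first coordinate -/
noncomputable def pdN : ℕ → (ℝ × ℝ → ℝ) → ℝ × ℝ → ℝ
  | 0, f => f
  | (k+1), f => pderiv1 (pdN k f)

lemma pdN_zero (f : ℝ × ℝ → ℝ) : pdN 0 f = f := rfl
lemma pdN_succ (k : ℕ) (f : ℝ × ℝ → ℝ) : pdN (k+1) f = pderiv1 (pdN k f) := rfl

lemma pderiv1_contDiffOn {f : ℝ × ℝ → ℝ} {U : Set (ℝ × ℝ)} {n m : WithTop ℕ∞}
    (hU : IsOpen U) (hf : ContDiffOn ℝ n f U) (hmn : m + 1 ≤ n) :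
    ContDiffOn ℝ m (pderiv1 f) U :=
  (hf.fderiv_of_isOpen hU hmn).clm_apply contDiffOn_const

lemma pdN_contDiffOn {f : ℝ × ℝ → ℝ} {U : Set (ℝ × ℝ)}
    (hU : IsOpen U) (hf : ContDiffOn ℝ 5 f U) :
    ∀ k : ℕ, k ≤ 5 → ContDiffOn ℝ ((5 - k : ℕ) : WithTop ℕ∞) (pdN k f) U := by
  intro k
  induction k with
  | zero => intro _; simpa [pdN_zero] using hf
  | succ k ih =>
    intro hk
    have hk5 : k ≤ 5 := by omega
    have hle : ((5 - (k+1) : ℕ) : WithTop ℕ∞) + 1 ≤ ((5 - k : ℕ) : WithTop ℕ∞) := by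
      have : (5 - (k+1) : ℕ) + 1 ≤ (5 - k : ℕ) := by omega
      exact_mod_cast this
    exact pderiv1_contDiffOn hU (ih hk5) hle

lemma slice_hasDerivAt {f : ℝ × ℝ → ℝ} {x y : ℝ}
    (hf : DifferentiableAt ℝ f (x, y)) :
    HasDerivAt (fun s => f (s, y)) (pderiv1 f (x, y)) x := by
  have h1 : HasDerivAt (fun s : ℝ => (s, y)) ((1 : ℝ), (0 : ℝ)) x :=
    (hasDerivAt_id x).prodMk (hasDerivAt_const x y)
  exact hf.hasFDerivAt.comp_hasDerivAt x h1


lemma mvt_step {a b p C : ℝ} {m : ℕ} {φ φ' : ℝ → ℝ}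
    (hC : 0 ≤ C) (hp : p ∈ Icc a b) (hφp : φ p = 0)
    (hd : ∀ x ∈ Icc a b, HasDerivAt φ (φ' x) x)
    (hb : ∀ x ∈ Icc a b, |φ' x| ≤ C * |x - p| ^ m) :
    ∀ x ∈ Icc a b, |φ x| ≤ C * |x - p| ^ (m + 1) := by
  intro x hx
  rcases le_total p x with hpx | hpx
  · have sub : Icc p x ⊆ Icc a b := Icc_subset_Icc hp.1 hx.2
    have bound : ∀ s ∈ Ico p x, ‖φ' s‖ ≤ C * |x - p| ^ m := by
      intro s hs
      have hsI : s ∈ Icc a b := sub ⟨hs.1, hs.2.le⟩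
      have h1 : |s - p| ≤ |x - p| := by
        rw [abs_of_nonneg (by linarith [hs.1] : (0:ℝ) ≤ s - p),
          abs_of_nonneg (by linarith : (0:ℝ) ≤ x - p)]
        linarith [hs.2.le]
      calc ‖φ' s‖ = |φ' s| := rfl
        _ ≤ C * |s - p| ^ m := hb s hsI
        _ ≤ C * |x - p| ^ m := by gcongr
    have key := norm_image_sub_le_of_norm_deriv_le_segment'
      (fun s hs => (hd s (sub hs)).hasDerivWithinAt) bound x (right_mem_Icc.mpr hpx)
    rw [hφp, sub_zero] at key
    have hxp : x - p = |x - p| := (abs_of_nonneg (by linarith)).symm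
    calc |φ x| = ‖φ x‖ := rfl
      _ ≤ C * |x - p| ^ m * (x - p) := key
      _ = C * |x - p| ^ (m+1) := by rw [pow_succ, ← hxp]; ring
  · have sub : Icc x p ⊆ Icc a b := Icc_subset_Icc hx.1 hp.2
    have bound : ∀ s ∈ Ico x p, ‖φ' s‖ ≤ C * |x - p| ^ m := by
      intro s hs
      have hsI : s ∈ Icc a b := sub ⟨hs.1, hs.2.le⟩
      have h1 : |s - p| ≤ |x - p| := by
        rw [abs_of_nonpos (by linarith [hs.2.le] : s - p ≤ 0),
          abs_of_nonpos (by linarith : x - p ≤ 0)]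
        linarith [hs.1]
      calc ‖φ' s‖ = |φ' s| := rfl
        _ ≤ C * |s - p| ^ m := hb s hsI
        _ ≤ C * |x - p| ^ m := by gcongr
    have key := norm_image_sub_le_of_norm_deriv_le_segment'
      (fun s hs => (hd s (sub hs)).hasDerivWithinAt) bound p (right_mem_Icc.mpr hpx)
    rw [hφp, zero_sub, norm_neg] at key
    have hxp : p - x = |x - p| := by
      rw [abs_of_nonpos (by linarith : x - p ≤ 0)]; ring
    calc |φ x| = ‖φ x‖ := rfl
      _ ≤ C * |x - p| ^ m * (p - x) := key
      _ = C * |x - p| ^ (m+1) := by rw [pow_succ, ← hxp]; ring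


lemma partial_integrable {f : ℝ → ℝ → ℝ} {a b c d : ℝ} (hab : a ≤ b) (hcd : c ≤ d)
    (hf : ContinuousOn (Function.uncurry f) (Icc a b ×ˢ Icc c d)) :
    IntervalIntegrable (fun x => ∫ y in c..d, f x y) volume a b := by
  have h1 : IntegrableOn (Function.uncurry f) (Icc a b ×ˢ Icc c d) :=
    hf.integrableOn_compact (isCompact_Icc.prod isCompact_Icc)
  have h2 : IntegrableOn (Function.uncurry f) (Ioc a b ×ˢ Ioc c d) :=
    h1.mono_set (prod_mono Ioc_subset_Icc_self Ioc_subset_Icc_self)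
  have h3 : Integrable (Function.uncurry f)
      ((volume.restrict (Ioc a b)).prod (volume.restrict (Ioc c d))) := by
    rw [Measure.prod_restrict]
    exact h2
  have h4 := h3.integral_prod_left
  rw [intervalIntegrable_iff_integrableOn_Ioc_of_le hab]
  exact h4.congr (Filter.Eventually.of_forall (fun x => (integral_of_le hcd).symm))

lemma interval_fubini {f : ℝ → ℝ → ℝ} {a b c d : ℝ} (hab : a ≤ b) (hcd : c ≤ d)
    (hf : ContinuousOn (Function.uncurry f) (Icc a b ×ˢ Icc c d)) :
    (∫ x in a..b, ∫ y in c..d, f x y) = ∫ y in c..d, ∫ x in a..b, f x y := by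
  have h1 : IntegrableOn (Function.uncurry f) (Icc a b ×ˢ Icc c d) :=
    hf.integrableOn_compact (isCompact_Icc.prod isCompact_Icc)
  have h2 : IntegrableOn (Function.uncurry f) (Ioc a b ×ˢ Ioc c d) :=
    h1.mono_set (prod_mono Ioc_subset_Icc_self Ioc_subset_Icc_self)
  have h3 : Integrable (Function.uncurry f)
      ((volume.restrict (Ioc a b)).prod (volume.restrict (Ioc c d))) := by
    rw [Measure.prod_restrict]
    exact h2
  simp_rw [integral_of_le hab, integral_of_le hcd]
  exact MeasureTheory.integral_integral_swap h3

lemma slice_contOn {f : ℝ × ℝ → ℝ} {U : Set (ℝ × ℝ)} (hU : IsOpen U)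
    (hf : ContinuousOn f U) {e : ℝ → ℝ × ℝ} (he : Continuous e) {s : Set ℝ}
    (hs : ∀ y ∈ s, e y ∈ U) : ContinuousOn (fun y => f (e y)) s :=
  fun y hy => ((hf.continuousAt (hU.mem_nhds (hs y hy))).comp
    (he.continuousAt (x := y))).continuousWithinAt


set_option maxHeartbeats 1600000 in
lemma core1D (b h C : ℝ) (g : ℕ → ℝ → ℝ) (hh : 0 < h)
    (hg : ∀ k, k < 5 → ∀ x ∈ Icc (b - 2*h) (b + 3*h), HasDerivAt (g k) (g (k+1) x) x)
    (hC : ∀ x ∈ Icc (b - 2*h) (b + 3*h), |g 5 x| ≤ C) :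
    |(1/(12*h^3)) * (-(∫ x in (b+2*h)..(b+3*h), g 0 x) + 8*(∫ x in (b+h)..(b+2*h), g 0 x)
        - 8*(∫ x in (b-h)..b, g 0 x) + (∫ x in (b-2*h)..(b-h), g 0 x))
      - (1/h^2) * (g 0 (b+h) - g 0 b)| ≤ 400 * C * h^3 := by
  have hne : h ≠ 0 := ne_of_gt hh
  set I := Icc (b - 2*h) (b + 3*h) with hIdef
  have hbI : b ∈ I := ⟨by linarith, by linarith⟩
  have hC0 : 0 ≤ C := le_trans (abs_nonneg _) (hC b hbI)
  have m0 : b - 2*h ∈ I := ⟨le_refl _, by linarith⟩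
  have m1 : b - h ∈ I := ⟨by linarith, by linarith⟩
  have m2 : b + h ∈ I := ⟨by linarith, by linarith⟩
  have m3 : b + 2*h ∈ I := ⟨by linarith, by linarith⟩
  have m4 : b + 3*h ∈ I := ⟨by linarith, le_refl _⟩
  set a0 := g 0 b with ha0
  set a1 := g 1 b with ha1
  set a2 := g 2 b with ha2
  set a3 := g 3 b with ha3
  set a4 := g 4 b with ha4
  set P0 : ℝ → ℝ := fun x => a0 + a1*(x-b) + a2/2*(x-b)^2 + a3/6*(x-b)^3 + a4/24*(x-b)^4 with hP0
  set P1 : ℝ → ℝ := fun x => a1 + a2*(x-b) + a3/2*(x-b)^2 + a4/6*(x-b)^3 with hP1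
  set P2 : ℝ → ℝ := fun x => a2 + a3*(x-b) + a4/2*(x-b)^2 with hP2
  set P3 : ℝ → ℝ := fun x => a3 + a4*(x-b) with hP3
  set Q : ℝ → ℝ := fun x =>
    a0*(x-b) + a1/2*(x-b)^2 + a2/6*(x-b)^3 + a3/24*(x-b)^4 + a4/120*(x-b)^5 with hQ
  have hid : ∀ x : ℝ, HasDerivAt (fun s : ℝ => s - b) 1 x :=
    fun x => (hasDerivAt_id x).sub_const b
  have hdP0 : ∀ x, HasDerivAt P0 (P1 x) x := by
    intro x
    have H := ((((hasDerivAt_const x a0).add ((hid x).const_mul a1)).add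
      (((hid x).pow 2).const_mul (a2/2))).add (((hid x).pow 3).const_mul (a3/6))).add
      (((hid x).pow 4).const_mul (a4/24))
    convert H using 1
    show P1 x = _
    rw [hP1]; push_cast; ring
    all_goals rfl
  have hdP1 : ∀ x, HasDerivAt P1 (P2 x) x := by
    intro x
    have H := (((hasDerivAt_const x a1).add ((hid x).const_mul a2)).add
      (((hid x).pow 2).const_mul (a3/2))).add (((hid x).pow 3).const_mul (a4/6))
    convert H using 1
    show P2 x = _
    rw [hP2]; push_cast; ring
    all_goals rfl
  have hdP2 : ∀ x, HasDerivAt P2 (P3 x) x := by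
    intro x
    have H := ((hasDerivAt_const x a2).add ((hid x).const_mul a3)).add
      (((hid x).pow 2).const_mul (a4/2))
    convert H using 1
    show P3 x = _
    rw [hP3]; push_cast; ring
    all_goals rfl
  have hdP3 : ∀ x, HasDerivAt P3 ((fun _ => a4) x) x := by
    intro x
    have H := (hasDerivAt_const x a3).add ((hid x).const_mul a4)
    convert H using 1
    norm_num
    show a4 = 0 + a4 * 1; ring
    all_goals rfl
  have hdQ : ∀ x, HasDerivAt Q (P0 x) x := by
    intro x
    have H := (((((hid x).const_mul a0).add (((hid x).pow 2).const_mul (a1/2))).add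
      (((hid x).pow 3).const_mul (a2/6))).add (((hid x).pow 4).const_mul (a3/24))).add
      (((hid x).pow 5).const_mul (a4/120))
    convert H using 1
    show P0 x = _
    rw [hP0]; push_cast; ring
    all_goals rfl
  -- remainder chain
  have d4 : ∀ x ∈ I, HasDerivAt (fun x => g 4 x - (fun _ => a4) x) (g 5 x) x := by
    intro x hx
    simpa using (hg 4 (by norm_num) x hx).sub_const a4
  have s4 : ∀ x ∈ I, |g 4 x - (fun _ => a4) x| ≤ C * |x - b| ^ (0 + 1) := by
    refine mvt_step hC0 hbI (by simp [ha4]) d4 ?_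
    intro x hx; simpa using hC x hx
  have d3 : ∀ x ∈ I, HasDerivAt (fun x => g 3 x - P3 x) (g 4 x - (fun _ => a4) x) x :=
    fun x hx => (hg 3 (by norm_num) x hx).sub (hdP3 x)
  have s3 : ∀ x ∈ I, |g 3 x - P3 x| ≤ C * |x - b| ^ (1 + 1) := by
    refine mvt_step hC0 hbI (by simp [hP3, ha3]) d3 s4
  have d2 : ∀ x ∈ I, HasDerivAt (fun x => g 2 x - P2 x) (g 3 x - P3 x) x :=
    fun x hx => (hg 2 (by norm_num) x hx).sub (hdP2 x)
  have s2 : ∀ x ∈ I, |g 2 x - P2 x| ≤ C * |x - b| ^ (2 + 1) := by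
    refine mvt_step hC0 hbI (by simp [hP2, ha2]) d2 s3
  have d1 : ∀ x ∈ I, HasDerivAt (fun x => g 1 x - P1 x) (g 2 x - P2 x) x :=
    fun x hx => (hg 1 (by norm_num) x hx).sub (hdP1 x)
  have s1 : ∀ x ∈ I, |g 1 x - P1 x| ≤ C * |x - b| ^ (3 + 1) := by
    refine mvt_step hC0 hbI (by simp [hP1, ha1]) d1 s2
  have d0 : ∀ x ∈ I, HasDerivAt (fun x => g 0 x - P0 x) (g 1 x - P1 x) x :=
    fun x hx => (hg 0 (by norm_num) x hx).sub (hdP0 x)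
  have s0 : ∀ x ∈ I, |g 0 x - P0 x| ≤ C * |x - b| ^ (4 + 1) := by
    refine mvt_step hC0 hbI (by simp [hP0, ha0]) d0 s1
  -- bound on remainder on I
  have s0' : ∀ x ∈ I, |g 0 x - P0 x| ≤ 243 * C * h^5 := by
    intro x hx
    have h1 : |x - b| ≤ 3*h := by
      rw [abs_le]; constructor <;> [linarith [hx.1]; linarith [hx.2]]
    calc |g 0 x - P0 x| ≤ C * |x - b| ^ (4+1) := s0 x hx
      _ ≤ C * (3*h) ^ (4+1) := by gcongr
      _ = 243 * C * h^5 := by ring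
  -- continuity and decomposition of cell integrals
  have hgc : ContinuousOn (g 0) I :=
    fun x hx => ((hg 0 (by norm_num) x hx).continuousAt).continuousWithinAt
  have husub : ∀ s t : ℝ, s ∈ I → t ∈ I → uIcc s t ⊆ I := by
    intro s t hs ht x hx
    rcases mem_uIcc.mp hx with ⟨h1, h2⟩ | ⟨h1, h2⟩ <;>
      exact ⟨by linarith [hs.1, ht.1], by linarith [hs.2, ht.2]⟩
  have hP0cont : Continuous P0 := by rw [hP0]; fun_prop
  have decomp : ∀ s t : ℝ, s ∈ I → t ∈ I →
      (∫ x in s..t, g 0 x) = (Q t - Q s) + ∫ x in s..t, (g 0 x - P0 x) := by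
    intro s t hs ht
    have hPint : IntervalIntegrable P0 volume s t := hP0cont.intervalIntegrable _ _
    have hgint : IntervalIntegrable (g 0) volume s t :=
      (hgc.mono (husub s t hs ht)).intervalIntegrable
    have h1 : ∫ x in s..t, P0 x = Q t - Q s :=
      integral_eq_sub_of_hasDerivAt (fun x _ => hdQ x) hPint
    have h2 : ∫ x in s..t, (g 0 x - P0 x) = (∫ x in s..t, g 0 x) - ∫ x in s..t, P0 x :=
      integral_sub hgint hPint
    rw [h2, h1]; ring
  -- bound each remainder integral
  have J : ∀ s t : ℝ, s ∈ I → t ∈ I → |∫ x in s..t, (g 0 x - P0 x)| ≤ 243*C*h^5 * |t - s| := by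
    intro s t hs ht
    have hb : ∀ x ∈ uIoc s t, ‖g 0 x - P0 x‖ ≤ 243*C*h^5 := by
      intro x hx
      have hxI : x ∈ I := by
        rcases mem_uIoc.mp hx with ⟨h1, h2⟩ | ⟨h1, h2⟩ <;>
          exact ⟨by linarith [hs.1, ht.1], by linarith [hs.2, ht.2]⟩
      simpa using s0' x hxI
    simpa using intervalIntegral.norm_integral_le_of_norm_le_const hb
  -- assemble
  have e3 := decomp (b+2*h) (b+3*h) m3 m4
  have e2 := decomp (b+h) (b+2*h) m2 m3
  have e1 := decomp (b-h) b m1 hbI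
  have e0 := decomp (b-2*h) (b-h) m0 m1
  have hPb : P0 b = a0 := by rw [hP0]; norm_num
  have hQP : (1/(12*h^3)) * (-(Q (b+3*h) - Q (b+2*h)) + 8*(Q (b+2*h) - Q (b+h))
      - 8*(Q b - Q (b-h)) + (Q (b-h) - Q (b-2*h))) - (1/h^2) * (P0 (b+h) - P0 b) = 0 := by
    simp only [hQ, hP0]
    field_simp
    ring
  have hψbh : |g 0 (b+h) - P0 (b+h)| ≤ C*h^5 := by
    have := s0 (b+h) m2
    simpa [abs_of_pos hh] using this
  have habs : ∀ s t : ℝ, s ∈ I → t ∈ I → t - s = h →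
      |∫ x in s..t, (g 0 x - P0 x)| ≤ 243*C*h^6 := by
    intro s t hs ht hst
    have h2 := J s t hs ht
    rw [hst, abs_of_pos hh] at h2
    calc |∫ x in s..t, (g 0 x - P0 x)| ≤ 243*C*h^5*h := h2
      _ = 243*C*h^6 := by ring
  have J3 := habs (b+2*h) (b+3*h) m3 m4 (by ring)
  have J2 := habs (b+h) (b+2*h) m2 m3 (by ring)
  have J1 := habs (b-h) b m1 hbI (by ring)
  have J0 := habs (b-2*h) (b-h) m0 m1 (by ring)
  rw [e3, e2, e1, e0]
  set R3 := ∫ x in (b+2*h)..(b+3*h), (g 0 x - P0 x) with hR3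
  set R2 := ∫ x in (b+h)..(b+2*h), (g 0 x - P0 x) with hR2
  set R1 := ∫ x in (b-h)..b, (g 0 x - P0 x) with hR1
  set R0 := ∫ x in (b-2*h)..(b-h), (g 0 x - P0 x) with hR0
  have key : (1/(12*h^3)) * (-((Q (b+3*h) - Q (b+2*h)) + R3) + 8*((Q (b+2*h) - Q (b+h)) + R2)
        - 8*((Q b - Q (b-h)) + R1) + ((Q (b-h) - Q (b-2*h)) + R0)) - (1/h^2) * (g 0 (b+h) - a0)
      = (1/(12*h^3))*(-R3 + 8*R2 - 8*R1 + R0) - (1/h^2)*(g 0 (b+h) - P0 (b+h)) := by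
    rw [hPb] at hQP
    linear_combination hQP
  rw [key]
  have hX : |(1/(12*h^3))*(-R3 + 8*R2 - 8*R1 + R0)| ≤ 365*C*h^3 := by
    rw [abs_mul, abs_of_pos (show (0:ℝ) < 1/(12*h^3) by positivity)]
    have tri : |(-R3 + 8*R2 - 8*R1 + R0)| ≤ 4374*C*h^6 := by
      rw [abs_le]
      constructor <;>
        linarith [le_abs_self R3, neg_abs_le R3, le_abs_self R2, neg_abs_le R2,
          le_abs_self R1, neg_abs_le R1, le_abs_self R0, neg_abs_le R0, J3, J2, J1, J0]
    calc (1/(12*h^3)) * |(-R3 + 8*R2 - 8*R1 + R0)| ≤ (1/(12*h^3)) * (4374*C*h^6) := by gcongr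
      _ = (4374/12)*C*h^3 := by field_simp
      _ ≤ 365*C*h^3 := by nlinarith [mul_nonneg hC0 (pow_pos hh 3).le]
  have hY : |(1/h^2)*(g 0 (b+h) - P0 (b+h))| ≤ C*h^3 := by
    rw [abs_mul, abs_of_pos (show (0:ℝ) < 1/h^2 by positivity)]
    calc (1/h^2) * |g 0 (b+h) - P0 (b+h)| ≤ (1/h^2)*(C*h^5) := by gcongr
      _ = C*h^3 := by field_simp
  calc |(1/(12*h^3))*(-R3 + 8*R2 - 8*R1 + R0) - (1/h^2)*(g 0 (b+h) - P0 (b+h))|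
      ≤ |(1/(12*h^3))*(-R3 + 8*R2 - 8*R1 + R0)| + |(1/h^2)*(g 0 (b+h) - P0 (b+h))| := by
        exact abs_sub _ _
    _ ≤ 365*C*h^3 + C*h^3 := by linarith
    _ ≤ 400*C*h^3 := by nlinarith [mul_nonneg hC0 (pow_pos hh 3).le]


lemma component {b c δ B : ℝ} {w : ℝ × ℝ → ℝ} {U : Set (ℝ × ℝ)} (hU : IsOpen U)
    (hδ : 0 < δ) (hKU : Icc (b - 4*δ) (b + 4*δ) ×ˢ Icc (c - 4*δ) (c + 4*δ) ⊆ U)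
    (hw : ContDiffOn ℝ 5 w U)
    (hB : ∀ z ∈ Icc (b - 4*δ) (b + 4*δ) ×ˢ Icc (c - 4*δ) (c + 4*δ), |pdN 5 w z| ≤ B)
    {h : ℝ} (h0 : 0 < h) (h1 : h < δ) :
    |(1/(12*h^3)) * (-(∫ x in (b+2*h)..(b+3*h), ∫ y in c..(c+h), w (x, y))
        + 8*(∫ x in (b+h)..(b+2*h), ∫ y in c..(c+h), w (x, y))
        - 8*(∫ x in (b-h)..b, ∫ y in c..(c+h), w (x, y))
        + (∫ x in (b-2*h)..(b-h), ∫ y in c..(c+h), w (x, y)))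
      - (1/h^2) * ((∫ y in c..(c+h), w (b+h, y)) - ∫ y in c..(c+h), w (b, y))| ≤ 400*B*h^4 := by
  set K := Icc (b - 4*δ) (b + 4*δ) ×ˢ Icc (c - 4*δ) (c + 4*δ) with hK
  have memK : ∀ x t : ℝ, b - 4*δ ≤ x → x ≤ b + 4*δ → c - 4*δ ≤ t → t ≤ c + 4*δ →
      (x, t) ∈ K := fun x t h1 h2 h3 h4 => ⟨⟨h1, h2⟩, ⟨h3, h4⟩⟩
  have cd := pdN_contDiffOn hU hw
  have hcch : c ≤ c + h := by linarith
  have hsub : uIoc c (c+h) ⊆ Icc c (c+h) := by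
    rw [uIoc_of_le hcch]; exact Ioc_subset_Icc_self
  have hchain : ∀ k, k < 5 → ∀ x₀ ∈ Icc (b - 2*h) (b + 3*h),
      HasDerivAt (fun x => ∫ y in c..(c+h), pdN k w (x, y))
        (∫ y in c..(c+h), pdN (k+1) w (x₀, y)) x₀ := by
    intro k hk x₀ hx₀
    have hk5 : k ≤ 5 := by omega
    have hk15 : k + 1 ≤ 5 := by omega
    obtain ⟨B', hB'⟩ := (isCompact_Icc.prod isCompact_Icc).exists_bound_of_continuousOn
      ((cd (k+1) hk15).continuousOn.mono hKU)
    have hballK : ∀ x ∈ Metric.ball x₀ δ, ∀ t ∈ Icc c (c+h), (x, t) ∈ K := by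
      intro x hx t ht
      have hd : |x - x₀| < δ := by
        have := Metric.mem_ball.mp hx; rwa [Real.dist_eq] at this
      have h2 := abs_lt.mp hd
      exact memK x t (by linarith [hx₀.1]) (by linarith [hx₀.2])
        (by linarith [ht.1]) (by linarith [ht.2])
    have hballU : ∀ x ∈ Metric.ball x₀ δ, ∀ t ∈ Icc c (c+h), (x, t) ∈ U :=
      fun x hx t ht => hKU (hballK x hx t ht)
    have hslice : ∀ j, j ≤ 5 → ∀ x ∈ Metric.ball x₀ δ,
        ContinuousOn (fun t => pdN j w (x, t)) (Icc c (c+h)) := by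
      intro j hj x hx
      have hcont2 : Continuous (fun t : ℝ => (x, t)) := by fun_prop
      intro t ht
      have hca : ContinuousAt (pdN j w) (x, t) :=
        (cd j hj).continuousOn.continuousAt (hU.mem_nhds (hballU x hx t ht))
      exact (hca.comp (hcont2.continuousAt (x := t))).continuousWithinAt
    refine (intervalIntegral.hasDerivAt_integral_of_dominated_loc_of_deriv_le (𝕜 := ℝ)
      (E := ℝ) (μ := volume) (F := fun x t => pdN k w (x, t))
      (F' := fun x t => pdN (k+1) w (x, t)) (bound := fun _ => B') (a := c) (b := c+h)
      (x₀ := x₀) (s := Metric.ball x₀ δ) (Metric.ball_mem_nhds x₀ hδ) ?_ ?_ ?_ ?_ ?_ ?_).2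
    · filter_upwards [Metric.ball_mem_nhds x₀ hδ] with x hx
      exact ((hslice k hk5 x hx).mono hsub).aestronglyMeasurable measurableSet_uIoc
    · apply ContinuousOn.intervalIntegrable
      have := hslice k hk5 x₀ (Metric.mem_ball_self hδ)
      rwa [uIcc_of_le hcch]
    · exact ((hslice (k+1) hk15 x₀ (Metric.mem_ball_self hδ)).mono hsub).aestronglyMeasurable
        measurableSet_uIoc
    · refine Filter.Eventually.of_forall (fun t ht x hx => hB' (x, t) ?_)
      exact hballK x hx t (hsub ht)
    · exact intervalIntegrable_const
    · refine Filter.Eventually.of_forall (fun t ht x hx => ?_)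
      have hdiff : DifferentiableAt ℝ (pdN k w) (x, t) := by
        have h5k : (1 : WithTop ℕ∞) ≤ ((5 - k : ℕ) : WithTop ℕ∞) := by
          exact_mod_cast (by omega : 1 ≤ 5 - k)
        exact ((cd k hk5).differentiableOn (zero_lt_one.trans_le h5k).ne').differentiableAt
          (hU.mem_nhds (hballU x hx t (hsub ht)))
      exact slice_hasDerivAt hdiff
  have hGC : ∀ x ∈ Icc (b - 2*h) (b + 3*h), |∫ y in c..(c+h), pdN 5 w (x, y)| ≤ B * h := by
    intro x hx
    have hb : ∀ t ∈ uIoc c (c+h), ‖pdN 5 w (x, t)‖ ≤ B := by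
      intro t ht
      have htI : t ∈ Icc c (c+h) := hsub ht
      exact hB (x, t) (memK x t (by linarith [hx.1]) (by linarith [hx.2])
        (by linarith [htI.1]) (by linarith [htI.2]))
    have h2 := intervalIntegral.norm_integral_le_of_norm_le_const hb
    rw [add_sub_cancel_left, abs_of_pos h0] at h2
    exact h2
  have main := core1D b h (B*h) (fun k x => ∫ y in c..(c+h), pdN k w (x, y)) h0 hchain hGC
  have e : 400 * (B*h) * h^3 = 400*B*h^4 := by ring
  rw [e] at main
  exact main


set_option maxHeartbeats 2000000 in
/-- Fourth-order accuracy of the two-dimensional discrete divergence operator `D`: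
the combination `(1/(12h)) Σ_d (−⟨u_d⟩_{2e^d} + 8⟨u_d⟩_{e^d} − 8⟨u_d⟩_{−e^d} + ⟨u_d⟩_{−2e^d})`
approximates the cell average of `∇·u` over the cell with index `(0,0)` to `O(h⁴)`. -/
theorem discrete_divergence_fourth_order
    (p q : ℝ) (u₁ u₂ : ℝ → ℝ → ℝ)
    (U : Set (ℝ × ℝ)) (hU : IsOpen U) (hx : (p, q) ∈ U)
    (hu₁ : ContDiffOn ℝ 5 (fun z : ℝ × ℝ => u₁ z.1 z.2) U)
    (hu₂ : ContDiffOn ℝ 5 (fun z : ℝ × ℝ => u₂ z.1 z.2) U) :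
    ∃ M > 0, ∃ h₀ > 0, ∀ h : ℝ, 0 < h → h < h₀ →
      |(1 / (12 * h)) *
          ((-(cellAvg2 u₁ p q h 2 0) + 8 * cellAvg2 u₁ p q h 1 0
            - 8 * cellAvg2 u₁ p q h (-1) 0 + cellAvg2 u₁ p q h (-2) 0)
          + (-(cellAvg2 u₂ p q h 0 2) + 8 * cellAvg2 u₂ p q h 0 1
            - 8 * cellAvg2 u₂ p q h 0 (-1) + cellAvg2 u₂ p q h 0 (-2)))
        - (1 / h ^ 2) * ∫ x in p..(p + h), ∫ y in q..(q + h),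
            (deriv (fun s => u₁ s y) x + deriv (fun s => u₂ x s) y)| ≤ M * h ^ 4 := by
  obtain ⟨ε, hε, hball⟩ := Metric.isOpen_iff.mp hU (p, q) hx
  set δ := ε/8 with hδdef
  have hδ : 0 < δ := by positivity
  set w₁ : ℝ × ℝ → ℝ := fun z => u₁ z.1 z.2 with hw₁
  set w₂ : ℝ × ℝ → ℝ := fun z => u₂ z.2 z.1 with hw₂
  set U₂ := Prod.swap ⁻¹' U with hU₂def
  have hU₂ : IsOpen U₂ := hU.preimage continuous_swap
  have hK₁U : Icc (p - 4*δ) (p + 4*δ) ×ˢ Icc (q - 4*δ) (q + 4*δ) ⊆ U := by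
    rintro ⟨zx, zy⟩ ⟨⟨e1, e2⟩, e3, e4⟩
    apply hball
    rw [Metric.mem_ball, Prod.dist_eq, Real.dist_eq, Real.dist_eq]
    refine sup_lt_iff.mpr ⟨abs_lt.mpr ⟨by linarith, by linarith⟩,
      abs_lt.mpr ⟨by linarith, by linarith⟩⟩
  have hK₂U : Icc (q - 4*δ) (q + 4*δ) ×ˢ Icc (p - 4*δ) (p + 4*δ) ⊆ U₂ := by
    rintro ⟨zy, zx⟩ ⟨⟨e1, e2⟩, e3, e4⟩
    dsimp only at e1 e2 e3 e4
    have : (zx, zy) ∈ Metric.ball ((p : ℝ), (q : ℝ)) ε := by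
      rw [Metric.mem_ball, Prod.dist_eq, Real.dist_eq, Real.dist_eq]
      dsimp only
      exact sup_lt_iff.mpr ⟨abs_lt.mpr ⟨by linarith, by linarith⟩,
        abs_lt.mpr ⟨by linarith, by linarith⟩⟩
    exact hball this
  have hw₂cd : ContDiffOn ℝ 5 w₂ U₂ := by
    have hsw : ContDiff ℝ 5 (Prod.swap : ℝ × ℝ → ℝ × ℝ) := contDiff_snd.prodMk contDiff_fst
    exact hu₂.comp hsw.contDiffOn (fun z hz => hz)
  have hcd₁ := pdN_contDiffOn hU hu₁
  have hcd₂ := pdN_contDiffOn hU₂ hw₂cd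
  obtain ⟨B₁, hB₁⟩ := (isCompact_Icc.prod isCompact_Icc).exists_bound_of_continuousOn
    ((hcd₁ 5 le_rfl).continuousOn.mono hK₁U)
  obtain ⟨B₂, hB₂⟩ := (isCompact_Icc.prod isCompact_Icc).exists_bound_of_continuousOn
    ((hcd₂ 5 le_rfl).continuousOn.mono hK₂U)
  have hB₁0 : 0 ≤ B₁ := le_trans (norm_nonneg _)
    (hB₁ (p, q) ⟨⟨by linarith, by linarith⟩, by linarith, by linarith⟩)
  have hB₂0 : 0 ≤ B₂ := le_trans (norm_nonneg _)
    (hB₂ (q, p) ⟨⟨by linarith, by linarith⟩, by linarith, by linarith⟩)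
  refine ⟨400*B₁ + 400*B₂ + 1, by linarith, δ, hδ, ?_⟩
  intro h h0 h1
  have X₁ := component hU hδ hK₁U hu₁ (fun z hz => hB₁ z hz) h0 h1
  have X₂ := component hU₂ hδ hK₂U hw₂cd (fun z hz => hB₂ z hz) h0 h1
  have hpph : p ≤ p + h := by linarith
  have hqqh : q ≤ q + h := by linarith
  have rect₁ : ∀ {x1 x2 y1 y2 : ℝ}, p - 4*δ ≤ x1 → x2 ≤ p + 4*δ → q - 4*δ ≤ y1 →
      y2 ≤ q + 4*δ → Icc x1 x2 ×ˢ Icc y1 y2 ⊆ U :=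
    fun e1 e2 e3 e4 =>
      (prod_mono (Icc_subset_Icc e1 e2) (Icc_subset_Icc e3 e4)).trans hK₁U
  have hcu₂ : ContinuousOn (Function.uncurry u₂) U := hu₂.continuousOn
  have ca1 : cellAvg2 u₁ p q h 2 0
      = (1/h^2) * ∫ x in (p+2*h)..(p+3*h), ∫ y in q..(q+h), w₁ (x, y) := by
    simp only [hw₁]; unfold cellAvg2; norm_num
  have ca2 : cellAvg2 u₁ p q h 1 0
      = (1/h^2) * ∫ x in (p+h)..(p+2*h), ∫ y in q..(q+h), w₁ (x, y) := by
    simp only [hw₁]; unfold cellAvg2; norm_num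
  have ca3 : cellAvg2 u₁ p q h (-1) 0
      = (1/h^2) * ∫ x in (p-h)..p, ∫ y in q..(q+h), w₁ (x, y) := by
    simp only [hw₁]; unfold cellAvg2; norm_num [sub_eq_add_neg]
  have ca4 : cellAvg2 u₁ p q h (-2) 0
      = (1/h^2) * ∫ x in (p-2*h)..(p-h), ∫ y in q..(q+h), w₁ (x, y) := by
    simp only [hw₁]; unfold cellAvg2; norm_num [sub_eq_add_neg]
  have cb1 : cellAvg2 u₂ p q h 0 2
      = (1/h^2) * ∫ x in (q+2*h)..(q+3*h), ∫ y in p..(p+h), w₂ (x, y) := by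
    have e1 : cellAvg2 u₂ p q h 0 2
        = (1/h^2) * ∫ x in p..(p+h), ∫ y in (q+2*h)..(q+3*h), u₂ x y := by
      unfold cellAvg2; norm_num
    rw [e1, interval_fubini hpph (by linarith : q+2*h ≤ q+3*h)
      (hcu₂.mono (rect₁ (by linarith) (by linarith) (by linarith) (by linarith)))]
  have cb2 : cellAvg2 u₂ p q h 0 1
      = (1/h^2) * ∫ x in (q+h)..(q+2*h), ∫ y in p..(p+h), w₂ (x, y) := by
    have e1 : cellAvg2 u₂ p q h 0 1
        = (1/h^2) * ∫ x in p..(p+h), ∫ y in (q+h)..(q+2*h), u₂ x y := by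
      unfold cellAvg2; norm_num
    rw [e1, interval_fubini hpph (by linarith : q+h ≤ q+2*h)
      (hcu₂.mono (rect₁ (by linarith) (by linarith) (by linarith) (by linarith)))]
  have cb3 : cellAvg2 u₂ p q h 0 (-1)
      = (1/h^2) * ∫ x in (q-h)..q, ∫ y in p..(p+h), w₂ (x, y) := by
    have e1 : cellAvg2 u₂ p q h 0 (-1)
        = (1/h^2) * ∫ x in p..(p+h), ∫ y in (q-h)..q, u₂ x y := by
      unfold cellAvg2; norm_num [sub_eq_add_neg]
    rw [e1, interval_fubini hpph (by linarith : q-h ≤ q)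
      (hcu₂.mono (rect₁ (by linarith) (by linarith) (by linarith) (by linarith)))]
  have cb4 : cellAvg2 u₂ p q h 0 (-2)
      = (1/h^2) * ∫ x in (q-2*h)..(q-h), ∫ y in p..(p+h), w₂ (x, y) := by
    have e1 : cellAvg2 u₂ p q h 0 (-2)
        = (1/h^2) * ∫ x in p..(p+h), ∫ y in (q-2*h)..(q-h), u₂ x y := by
      unfold cellAvg2; norm_num [sub_eq_add_neg]
    rw [e1, interval_fubini hpph (by linarith : q-2*h ≤ q-h)
      (hcu₂.mono (rect₁ (by linarith) (by linarith) (by linarith) (by linarith)))]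
  have h15 : (1 : WithTop ℕ∞) ≤ 5 := by norm_num
  have memU : ∀ x y : ℝ, p ≤ x → x ≤ p + h → q ≤ y → y ≤ q + h → (x, y) ∈ U :=
    fun x y a1 a2 a3 a4 => rect₁ (by linarith) (by linarith) (by linarith) (by linarith)
      ⟨⟨a1, a2⟩, ⟨a3, a4⟩⟩
  have hdiff₁ : ∀ x y : ℝ, (x, y) ∈ U → HasDerivAt (fun s => u₁ s y) (pderiv1 w₁ (x, y)) x := by
    intro x y hz
    have hd : DifferentiableAt ℝ w₁ (x, y) :=
      (hu₁.differentiableOn (zero_lt_one.trans_le h15).ne').differentiableAt (hU.mem_nhds hz)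
    exact slice_hasDerivAt hd
  have hdiff₂ : ∀ x y : ℝ, (x, y) ∈ U → HasDerivAt (fun s => u₂ x s) (pderiv1 w₂ (y, x)) y := by
    intro x y hz
    have hz₂ : ((y, x) : ℝ × ℝ) ∈ U₂ := hz
    have hd : DifferentiableAt ℝ w₂ (y, x) :=
      (hw₂cd.differentiableOn (zero_lt_one.trans_le h15).ne').differentiableAt (hU₂.mem_nhds hz₂)
    exact slice_hasDerivAt hd
  have hc₁ : ContinuousOn (pderiv1 w₁) U := (hcd₁ 1 (by norm_num)).continuousOn
  have hc₂ : ContinuousOn (pderiv1 w₂) U₂ := (hcd₂ 1 (by norm_num)).continuousOn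
  have uq : uIcc p (p+h) = Icc p (p+h) := uIcc_of_le hpph
  have uqy : uIcc q (q+h) = Icc q (q+h) := uIcc_of_le hqqh
  have tA : (∫ x in p..(p+h), ∫ y in q..(q+h),
        (deriv (fun s => u₁ s y) x + deriv (fun s => u₂ x s) y))
      = ∫ x in p..(p+h), ((∫ y in q..(q+h), pderiv1 w₁ (x, y)) + (w₂ (q+h, x) - w₂ (q, x))) := by
    refine integral_congr ?_
    intro x hx
    rw [uq] at hx
    beta_reduce
    have hinner : EqOn (fun y => (deriv (fun s => u₁ s y) x + deriv (fun s => u₂ x s) y))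
        (fun y => pderiv1 w₁ (x, y) + pderiv1 w₂ (y, x)) (uIcc q (q+h)) := by
      intro y hy
      rw [uqy] at hy
      have hz := memU x y hx.1 hx.2 hy.1 hy.2
      simp only
      rw [(hdiff₁ x y hz).deriv, (hdiff₂ x y hz).deriv]
    rw [integral_congr hinner]
    have i1 : IntervalIntegrable (fun y => pderiv1 w₁ (x, y)) volume q (q+h) := by
      apply ContinuousOn.intervalIntegrable
      rw [uqy]
      exact slice_contOn hU hc₁ (by fun_prop) (fun y hy => memU x y hx.1 hx.2 hy.1 hy.2)
    have i2 : IntervalIntegrable (fun y => pderiv1 w₂ (y, x)) volume q (q+h) := by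
      apply ContinuousOn.intervalIntegrable
      rw [uqy]
      exact slice_contOn hU₂ hc₂ (by fun_prop)
        (fun y hy => (memU x y hx.1 hx.2 hy.1 hy.2 : ((y, x) : ℝ × ℝ) ∈ U₂))
    rw [integral_add i1 i2]
    congr 1
    have hftc := integral_eq_sub_of_hasDerivAt (f := fun s => u₂ x s)
      (f' := fun y => pderiv1 w₂ (y, x)) (a := q) (b := q+h)
      (fun y hy => hdiff₂ x y (by rw [uqy] at hy; exact memU x y hx.1 hx.2 hy.1 hy.2)) i2
    rw [hftc]
  have iA : IntervalIntegrable (fun x => ∫ y in q..(q+h), pderiv1 w₁ (x, y)) volume p (p+h) := by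
    apply partial_integrable hpph hqqh
    exact hc₁.mono (rect₁ (by linarith) (by linarith) (by linarith) (by linarith))
  have iB1 : IntervalIntegrable (fun x => w₂ (q+h, x)) volume p (p+h) := by
    apply ContinuousOn.intervalIntegrable
    rw [uq]
    exact slice_contOn hU₂ hw₂cd.continuousOn (by fun_prop)
      (fun x hx => (memU x (q+h) hx.1 hx.2 (by linarith) le_rfl : ((q+h, x) : ℝ × ℝ) ∈ U₂))
  have iB2 : IntervalIntegrable (fun x => w₂ (q, x)) volume p (p+h) := by
    apply ContinuousOn.intervalIntegrable
    rw [uq]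
    exact slice_contOn hU₂ hw₂cd.continuousOn (by fun_prop)
      (fun x hx => (memU x q hx.1 hx.2 le_rfl (by linarith) : ((q, x) : ℝ × ℝ) ∈ U₂))
  have tB : (∫ x in p..(p+h), ((∫ y in q..(q+h), pderiv1 w₁ (x, y)) + (w₂ (q+h, x) - w₂ (q, x))))
      = (∫ x in p..(p+h), ∫ y in q..(q+h), pderiv1 w₁ (x, y))
        + ((∫ x in p..(p+h), w₂ (q+h, x)) - ∫ x in p..(p+h), w₂ (q, x)) := by
    rw [integral_add iA (iB1.sub iB2), integral_sub iB1 iB2]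
  have tC : (∫ x in p..(p+h), ∫ y in q..(q+h), pderiv1 w₁ (x, y))
      = (∫ y in q..(q+h), w₁ (p+h, y)) - ∫ y in q..(q+h), w₁ (p, y) := by
    rw [interval_fubini (f := fun x y => pderiv1 w₁ (x, y)) hpph hqqh
      (hc₁.mono (rect₁ (by linarith) (by linarith) (by linarith) (by linarith)))]
    have hftc : EqOn (fun y => ∫ x in p..(p+h), pderiv1 w₁ (x, y))
        (fun y => w₁ (p+h, y) - w₁ (p, y)) (uIcc q (q+h)) := by
      intro y hy
      rw [uqy] at hy
      have i3 : IntervalIntegrable (fun x => pderiv1 w₁ (x, y)) volume p (p+h) := by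
        apply ContinuousOn.intervalIntegrable
        rw [uq]
        exact slice_contOn hU hc₁ (by fun_prop) (fun x hx => memU x y hx.1 hx.2 hy.1 hy.2)
      exact integral_eq_sub_of_hasDerivAt (f := fun s => u₁ s y)
        (fun x hx => hdiff₁ x y (by rw [uq] at hx; exact memU x y hx.1 hx.2 hy.1 hy.2)) i3
    rw [integral_congr hftc]
    have j1 : IntervalIntegrable (fun y => w₁ (p+h, y)) volume q (q+h) := by
      apply ContinuousOn.intervalIntegrable
      rw [uqy]
      exact slice_contOn hU hu₁.continuousOn (by fun_prop)
        (fun y hy => memU (p+h) y (by linarith) le_rfl hy.1 hy.2)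
    have j2 : IntervalIntegrable (fun y => w₁ (p, y)) volume q (q+h) := by
      apply ContinuousOn.intervalIntegrable
      rw [uqy]
      exact slice_contOn hU hu₁.continuousOn (by fun_prop)
        (fun y hy => memU p y le_rfl (by linarith) hy.1 hy.2)
    exact integral_sub j1 j2
  rw [ca1, ca2, ca3, ca4, cb1, cb2, cb3, cb4, tA, tB, tC]
  have key : |((1/(12*h^3)) * (-(∫ x in (p+2*h)..(p+3*h), ∫ y in q..(q+h), w₁ (x, y))
        + 8*(∫ x in (p+h)..(p+2*h), ∫ y in q..(q+h), w₁ (x, y))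
        - 8*(∫ x in (p-h)..p, ∫ y in q..(q+h), w₁ (x, y))
        + (∫ x in (p-2*h)..(p-h), ∫ y in q..(q+h), w₁ (x, y)))
      - (1/h^2) * ((∫ y in q..(q+h), w₁ (p+h, y)) - ∫ y in q..(q+h), w₁ (p, y)))
      + ((1/(12*h^3)) * (-(∫ x in (q+2*h)..(q+3*h), ∫ y in p..(p+h), w₂ (x, y))
        + 8*(∫ x in (q+h)..(q+2*h), ∫ y in p..(p+h), w₂ (x, y))
        - 8*(∫ x in (q-h)..q, ∫ y in p..(p+h), w₂ (x, y))
        + (∫ x in (q-2*h)..(q-h), ∫ y in p..(p+h), w₂ (x, y)))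
      - (1/h^2) * ((∫ y in p..(p+h), w₂ (q+h, y)) - ∫ y in p..(p+h), w₂ (q, y)))|
      ≤ (400*B₁ + 400*B₂ + 1) * h^4 := by
    calc _ ≤ _ := abs_add_le _ _
      _ ≤ 400*B₁*h^4 + 400*B₂*h^4 := add_le_add X₁ X₂
      _ ≤ (400*B₁ + 400*B₂ + 1) * h^4 := by nlinarith [pow_pos h0 4]
  refine le_trans (le_of_eq (congrArg abs ?_)) key
  ring
end
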